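/- The linear map Ψ : C(NCP(n), |) → C(NCP(n), ∘) sending the interval [α, β] to the relative Kreweras complement K_β(α) is a morphism of coalgebras: (Ψ ⊗ Ψ)(Δ([α, β])) = Δ_∘(K_β(α)) for all α | β, and Ψ respects the counits. -/

import Mathlib

open scoped BigOperators

/-- A partition (setoid) of `Fin N` is noncrossing if there are no
`a < b < c < d` with `a ~ c`, `b ~ d` but `a ≁ b`. -/
def IsNoncrossing {N : ℕ} (π : Setoid (Fin N)) : Prop :=
  ∀ a b c d : Fin N, a < b → b < c → c < d → π a c → π b d → π a b

/-- The set of noncrossing partitions of `[N] = {1,…,N}`, modelled as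
noncrossing setoids on `Fin N`. -/
abbrev NCP (N : ℕ) : Type := {π : Setoid (Fin N) // IsNoncrossing π}

theorem bot_isNoncrossing (N : ℕ) : IsNoncrossing (⊥ : Setoid (Fin N)) := by
  intro a b c d hab hbc hcd hac _
  have h : a = c := by
    have := Setoid.bot_def (α := Fin N)
    exact by rw [show ((⊥ : Setoid (Fin N)) : Fin N → Fin N → Prop) = (· = ·) from this] at hac; exact hac
  exact absurd (h ▸ (hab.trans hbc)) (lt_irrefl a)

theorem top_isNoncrossing (N : ℕ) : IsNoncrossing (⊤ : Setoid (Fin N)) := by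
  intro a b c d _ _ _ _ _
  show (⊤ : Setoid (Fin N)) a b
  rw [show ((⊤ : Setoid (Fin N)) : Fin N → Fin N → Prop) = ⊤ from Setoid.top_def]
  trivial

theorem inf_isNoncrossing {N : ℕ} {π μ : Setoid (Fin N)}
    (hπ : IsNoncrossing π) (hμ : IsNoncrossing μ) : IsNoncrossing (π ⊓ μ) := by
  intro a b c d hab hbc hcd hac hbd
  have hac' : π a c ∧ μ a c := by
    rw [show ((π ⊓ μ : Setoid (Fin N)) : Fin N → Fin N → Prop) = ⇑π ⊓ ⇑μ from Setoid.inf_def] at hac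
    exact hac
  have hbd' : π b d ∧ μ b d := by
    rw [show ((π ⊓ μ : Setoid (Fin N)) : Fin N → Fin N → Prop) = ⇑π ⊓ ⇑μ from Setoid.inf_def] at hbd
    exact hbd
  show (π ⊓ μ) a b
  rw [show ((π ⊓ μ : Setoid (Fin N)) : Fin N → Fin N → Prop) = ⇑π ⊓ ⇑μ from Setoid.inf_def]
  exact ⟨hπ a b c d hab hbc hcd hac'.1 hbd'.1, hμ a b c d hab hbc hcd hac'.2 hbd'.2⟩

/-- The join of two partitions in the lattice of noncrossing partitions:
the finest noncrossing partition coarser than both. -/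
def ncSup {N : ℕ} (π μ : Setoid (Fin N)) : Setoid (Fin N) :=
  sInf {γ : Setoid (Fin N) | IsNoncrossing γ ∧ π ≤ γ ∧ μ ≤ γ}

theorem ncSup_isNoncrossing {N : ℕ} (π μ : Setoid (Fin N)) : IsNoncrossing (ncSup π μ) := by
  intro a b c d hab hbc hcd hac hbd
  rw [ncSup, Setoid.sInf_iff] at hac hbd ⊢
  intro γ hγ
  exact hγ.1 a b c d hab hbc hcd (hac γ hγ) (hbd γ hγ)

noncomputable instance NCP.instLattice (N : ℕ) : Lattice (NCP N) :=
  { (inferInstance : PartialOrder (NCP N)) with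
    sup := fun α β => ⟨ncSup α.1 β.1, ncSup_isNoncrossing _ _⟩
    inf := fun α β => ⟨α.1 ⊓ β.1, inf_isNoncrossing α.2 β.2⟩
    le_sup_left := fun α β => by
      show α.1 ≤ ncSup α.1 β.1
      exact le_sInf fun γ hγ => hγ.2.1
    le_sup_right := fun α β => by
      show β.1 ≤ ncSup α.1 β.1
      exact le_sInf fun γ hγ => hγ.2.2
    sup_le := fun α β γ h1 h2 => by
      show ncSup α.1 β.1 ≤ γ.1
      exact sInf_le ⟨γ.2, h1, h2⟩
    inf_le_left := fun α β => by
      show α.1 ⊓ β.1 ≤ α.1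
      exact inf_le_left
    inf_le_right := fun α β => by
      show α.1 ⊓ β.1 ≤ β.1
      exact inf_le_right
    le_inf := fun α β γ h1 h2 => by
      show α.1 ≤ β.1 ⊓ γ.1
      exact le_inf h1 h2 }

instance NCP.instOrderBot (N : ℕ) : OrderBot (NCP N) where
  bot := ⟨⊥, bot_isNoncrossing N⟩
  bot_le := fun α => by
    show (⊥ : Setoid (Fin N)) ≤ α.1
    exact bot_le

instance NCP.instOrderTop (N : ℕ) : OrderTop (NCP N) where
  top := ⟨⊤, top_isNoncrossing N⟩
  le_top := fun α => by
    show α.1 ≤ (⊤ : Setoid (Fin N))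
    exact le_top

/-- The disjoint sum of two setoids: elements are related iff they lie on
the same side and are related there. -/
def sumSetoid {A B : Type*} (α : Setoid A) (β : Setoid B) : Setoid (A ⊕ B) where
  r x y := match x, y with
    | Sum.inl a, Sum.inl a' => α a a'
    | Sum.inr b, Sum.inr b' => β b b'
    | _, _ => False
  iseqv := by
    constructor
    · intro x
      cases x with
      | inl a => exact α.refl' a
      | inr b => exact β.refl' b
    · intro x y h
      cases x <;> cases y <;>
        first
          | exact α.symm' h
          | exact β.symm' h
          | exact h.elim
    · intro x y z h1 h2
      cases x <;> cases y <;> cases z <;>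
        first
          | exact α.trans' h1 h2
          | exact β.trans' h1 h2
          | exact h1.elim
          | exact h2.elim

/-- Decoding map for the `n`-perfect shuffle of a partition of `[n]`
(placed on odd positions) and a partition of `[n]` (placed on even positions). -/
def decode2 (n : ℕ) (x : Fin (2*n)) : Fin n ⊕ Fin n :=
  if (x : ℕ) % 2 = 0 then Sum.inl ⟨(x:ℕ)/2, by have := x.isLt; omega⟩
  else Sum.inr ⟨(x:ℕ)/2, by have := x.isLt; omega⟩

/-- The `n`-perfect shuffle `α ∗_n β` of two partitions of `[n]`, a partition
of `[2n]`. -/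
def shuffle2 {n : ℕ} (α β : Setoid (Fin n)) : Setoid (Fin (2*n)) :=
  Setoid.comap (decode2 n) (sumSetoid α β)

/-- The pair `(α, β)` is `n`-admissible if the `n`-perfect shuffle `α ∗_n β`
is noncrossing. -/
def Admissible2 {n : ℕ} (α β : NCP n) : Prop := IsNoncrossing (shuffle2 α.1 β.1)

/-- The `p`-th power of a partition of `[n]`: each element is replicated `p`
times, all replicas being put in the same block. -/
def powSetoid (p : ℕ) {n : ℕ} (π : Setoid (Fin n)) : Setoid (Fin (p*n)) :=
  Setoid.comap (fun x : Fin (p*n) =>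
    (⟨(x:ℕ)/p, by
        have hx := x.isLt
        rcases Nat.eq_zero_or_pos p with h|h
        · subst h; exact absurd hx (by omega)
        · exact Nat.div_lt_of_lt_mul hx⟩ : Fin n)) π

theorem isNoncrossing_comap_of_monotone {M N : ℕ} (f : Fin M → Fin N) (hf : Monotone f)
    {π : Setoid (Fin N)} (hπ : IsNoncrossing π) : IsNoncrossing (Setoid.comap f π) := by
  intro a b c d hab hbc hcd hac hbd
  have h1 : f a ≤ f b := hf hab.le
  have h2 : f b ≤ f c := hf hbc.le
  have h3 : f c ≤ f d := hf hcd.le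
  show π (f a) (f b)
  have hac' : π (f a) (f c) := hac
  have hbd' : π (f b) (f d) := hbd
  rcases eq_or_lt_of_le h1 with e1 | l1
  · rw [← e1]
  · rcases eq_or_lt_of_le h2 with e2 | l2
    · rw [e2]; exact hac'
    · rcases eq_or_lt_of_le h3 with e3 | l3
      · rw [← e3] at hbd'
        exact π.trans' hac' (π.symm' hbd')
      · exact hπ (f a) (f b) (f c) (f d) l1 l2 l3 hac' hbd'

theorem powSetoid_isNoncrossing (p : ℕ) {n : ℕ} (π : NCP n) :
    IsNoncrossing (powSetoid p π.1) :=
  isNoncrossing_comap_of_monotone _ (fun x y h => by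
    simp only [Fin.mk_le_mk]
    exact Nat.div_le_div_right h) π.2

/-- The `p`-th power map `NCP n → NCP (p·n)`. -/
def npow (p : ℕ) {n : ℕ} (π : NCP n) : NCP (p*n) := ⟨powSetoid p π.1, powSetoid_isNoncrossing p π⟩

open Classical in
/-- The `p`-th root `π^{1/p}` of a partition of `[pn]`: the unique preimage
under the `p`-th power map when it exists (junk value `⊥` otherwise). -/
noncomputable def nroot (p n : ℕ) (π : Setoid (Fin (p*n))) : NCP n :=
  if h : ∃ σ : NCP n, (npow p σ).1 = π then h.choose else ⊥

/-- The interval partition `{{1,…,p},{p+1,…,2p},…,{pn−p+1,…,pn}}` of `[pn]`. -/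
def intervalSetoid (p n : ℕ) : Setoid (Fin (p*n)) :=
  Setoid.ker (fun x : Fin (p*n) => (x:ℕ)/p)

theorem intervalSetoid_isNoncrossing (p n : ℕ) : IsNoncrossing (intervalSetoid p n) := by
  intro a b c d hab hbc hcd hac _
  have h1 : (a:ℕ)/p = (c:ℕ)/p := hac
  have h2 : (a:ℕ)/p ≤ (b:ℕ)/p := Nat.div_le_div_right (le_of_lt hab)
  have h3 : (b:ℕ)/p ≤ (c:ℕ)/p := Nat.div_le_div_right (le_of_lt hbc)
  show (a:ℕ)/p = (b:ℕ)/p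
  exact le_antisymm h2 (by rw [h1]; exact h3)

/-- The interval partition as a noncrossing partition. -/
def intervalNCP (p n : ℕ) : NCP (p*n) := ⟨intervalSetoid p n, intervalSetoid_isNoncrossing p n⟩

/-- The composition product `α ∘ β := ((α ⧢_n β) ∨ {{1,2},…,{2n−1,2n}})^{1/2}`,
defined (meaningfully) on `n`-admissible pairs. -/
noncomputable def comp {n : ℕ} (α β : NCP n) : NCP n :=
  nroot 2 n (ncSup (shuffle2 α.1 β.1) (intervalSetoid 2 n))

open Classical in
/-- The Kreweras complement: the unique `γ` with `(α, γ)` admissible and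
`α ∘ γ = 1_n`. -/
noncomputable def kreweras {n : ℕ} (α : NCP n) : NCP n :=
  if h : ∃ γ : NCP n, Admissible2 α γ ∧ comp α γ = ⊤ then h.choose else ⊥

open Classical in
/-- The relative Kreweras complement `K_β(α)`: the unique `γ` with `(α, γ)`
admissible and `α ∘ γ = β`. -/
noncomputable def relKreweras {n : ℕ} (β α : NCP n) : NCP n :=
  if h : ∃ γ : NCP n, Admissible2 α γ ∧ comp α γ = β then h.choose else ⊥

/-- Iterated (left-associated) composition product `α_1 ∘ ⋯ ∘ α_k`. -/
noncomputable def compTuple {n : ℕ} : {k : ℕ} → (Fin k → NCP n) → NCP n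
  | 0, _ => ⊥
  | k+1, α => comp (compTuple (fun i : Fin k => α i.castSucc)) (α (Fin.last k))

/-- The `k`-fold `n`-perfect shuffle `α_1 ∗_n ⋯ ∗_n α_k` of `k` partitions of `[n]`,
a partition of `[kn]`. -/
def eqShuffle (n k : ℕ) (α : Fin k → Setoid (Fin n)) : Setoid (Fin (k*n)) where
  r x y := ∃ i : Fin k, ((x:ℕ) % k = (i:ℕ)) ∧ ((y:ℕ) % k = (i:ℕ)) ∧
      (α i) ⟨(x:ℕ)/k, Nat.div_lt_of_lt_mul x.isLt⟩ ⟨(y:ℕ)/k, Nat.div_lt_of_lt_mul y.isLt⟩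
  iseqv := by
    constructor
    · intro x
      have h0 : 0 < k * n := lt_of_le_of_lt (Nat.zero_le _) x.isLt
      have hk : 0 < k := by
        rcases Nat.eq_zero_or_pos k with h|h
        · subst h; rw [Nat.zero_mul] at h0; exact absurd h0 (lt_irrefl 0)
        · exact h
      exact ⟨⟨(x:ℕ) % k, Nat.mod_lt _ hk⟩, rfl, rfl, (α _).refl' _⟩
    · rintro x y ⟨i, h1, h2, h3⟩
      exact ⟨i, h2, h1, (α i).symm' h3⟩
    · rintro x y z ⟨i, h1, h2, h3⟩ ⟨j, h4, h5, h6⟩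
      obtain rfl : i = j := Fin.ext (by rw [← h2, h4])
      exact ⟨i, h1, h5, (α i).trans' h3 h6⟩

/-- A `k`-tuple of noncrossing partitions of `[n]` is `n`-admissible if its
`k`-fold perfect shuffle is noncrossing. -/
def AdmissibleTuple (n k : ℕ) (α : Fin k → NCP n) : Prop :=
  IsNoncrossing (eqShuffle n k fun i => (α i).1)

open scoped TensorProduct

/-! ### Auxiliary development for the Kreweras complement -/

namespace Krew

variable {n : ℕ}

def MCF (α τ : Setoid (Fin n)) : Prop :=
  (∀ a b c d : Fin n, a ≤ b → b < c → c ≤ d → α a c → τ b d → False) ∧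
  (∀ a b c d : Fin n, a < b → b ≤ c → c < d → τ a c → α b d → False)

lemma MCF.mono {α τ τ' : Setoid (Fin n)} (h : MCF α τ) (hle : τ' ≤ τ) : MCF α τ' :=
  ⟨fun a b c d h1 h2 h3 h4 h5 => h.1 a b c d h1 h2 h3 h4 (hle h5),
   fun a b c d h1 h2 h3 h4 h5 => h.2 a b c d h1 h2 h3 (hle h4) h5⟩

lemma MCF.mono_left {α α' τ : Setoid (Fin n)} (h : MCF α τ) (hle : α' ≤ α) : MCF α' τ :=
  ⟨fun a b c d h1 h2 h3 h4 h5 => h.1 a b c d h1 h2 h3 (hle h4) h5,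
   fun a b c d h1 h2 h3 h4 h5 => h.2 a b c d h1 h2 h3 h4 (hle h5)⟩

def sep (α : Setoid (Fin n)) (a b : Fin n) : Prop :=
  ∃ u v, α u v ∧ ((u ≤ a ∧ a < v ∧ v ≤ b) ∨ (a < u ∧ u ≤ b ∧ b < v))

lemma not_sep_self (α : Setoid (Fin n)) (a : Fin n) : ¬ sep α a a := by
  rintro ⟨u, v, _, (⟨h1, h2, h3⟩ | ⟨h1, h2, h3⟩)⟩
  · exact absurd (lt_of_lt_of_le h2 h3) (lt_irrefl a)
  · exact absurd (lt_of_lt_of_le h1 h2) (lt_irrefl a)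

lemma not_sep_trans1 {α : Setoid (Fin n)} {x y z : Fin n} (hxy : x ≤ y) (hyz : y ≤ z)
    (h1 : ¬ sep α x y) (h2 : ¬ sep α y z) : ¬ sep α x z := by
  rintro ⟨u, v, huv, (⟨c1, c2, c3⟩ | ⟨c1, c2, c3⟩)⟩
  · rcases le_or_gt v y with h | h
    · exact h1 ⟨u, v, huv, Or.inl ⟨c1, c2, h⟩⟩
    · exact h2 ⟨u, v, huv, Or.inl ⟨le_trans c1 hxy, h, c3⟩⟩
  · rcases le_or_gt u y with h | h
    · exact h1 ⟨u, v, huv, Or.inr ⟨c1, h, lt_of_le_of_lt hyz c3⟩⟩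
    · exact h2 ⟨u, v, huv, Or.inr ⟨h, c2, c3⟩⟩

lemma not_sep_trans2 {α : Setoid (Fin n)} {x y z : Fin n} (hxz : x ≤ z) (hzy : z ≤ y)
    (h1 : ¬ sep α x y) (h2 : ¬ sep α z y) : ¬ sep α x z := by
  rintro ⟨u, v, huv, (⟨c1, c2, c3⟩ | ⟨c1, c2, c3⟩)⟩
  · exact h1 ⟨u, v, huv, Or.inl ⟨c1, c2, le_trans c3 hzy⟩⟩
  · rcases le_or_gt v y with h | h
    · exact h2 ⟨u, v, huv, Or.inl ⟨c2, c3, h⟩⟩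
    · exact h1 ⟨u, v, huv, Or.inr ⟨c1, le_trans c2 hzy, h⟩⟩

lemma not_sep_trans3 {α : Setoid (Fin n)} {x y z : Fin n} (hyx : y ≤ x) (hxz : x ≤ z)
    (h1 : ¬ sep α y x) (h2 : ¬ sep α y z) : ¬ sep α x z := by
  rintro ⟨u, v, huv, (⟨c1, c2, c3⟩ | ⟨c1, c2, c3⟩)⟩
  · rcases le_or_gt u y with h | h
    · exact h2 ⟨u, v, huv, Or.inl ⟨h, lt_of_le_of_lt hyx c2, c3⟩⟩
    · exact h1 ⟨u, v, huv, Or.inr ⟨h, c1, c2⟩⟩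
  · exact h2 ⟨u, v, huv, Or.inr ⟨lt_of_le_of_lt hyx c1, c2, c3⟩⟩

def krel (β α : Setoid (Fin n)) (x y : Fin n) : Prop :=
  β x y ∧ (x ≤ y → ¬ sep α x y) ∧ (y ≤ x → ¬ sep α y x)

lemma krel.symm' {β α : Setoid (Fin n)} {x y : Fin n} (h : krel β α x y) : krel β α y x :=
  ⟨β.symm' h.1, h.2.2, h.2.1⟩

lemma krel_aux {β α : Setoid (Fin n)} {x y z : Fin n} (h1 : krel β α x y)
    (h2 : krel β α y z) (hxz : x ≤ z) : ¬ sep α x z := by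
  rcases le_total x y with hxy | hyx
  · rcases le_total y z with hyz | hzy
    · exact not_sep_trans1 hxy hyz (h1.2.1 hxy) (h2.2.1 hyz)
    · exact not_sep_trans2 hxz hzy (h1.2.1 hxy) (h2.2.2 hzy)
  · rcases le_total y z with hyz | hzy
    · exact not_sep_trans3 hyx hxz (h1.2.2 hyx) (h2.2.1 hyz)
    · have : x = z := le_antisymm hxz (le_trans hzy hyx)
      subst this; exact not_sep_self α x

lemma krel_equiv (β α : Setoid (Fin n)) : Equivalence (krel β α) := by
  constructor
  · intro x
    exact ⟨β.refl' x, fun _ => not_sep_self α x, fun _ => not_sep_self α x⟩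
  · intro x y h; exact h.symm'
  · intro x y z h1 h2
    exact ⟨β.trans' h1.1 h2.1, fun h => krel_aux h1 h2 h,
      fun h => krel_aux h2.symm' h1.symm' h⟩

/-- The relative Kreweras complement of `α` inside `β`, as a setoid. -/
def ksetoid (β α : Setoid (Fin n)) : Setoid (Fin n) := ⟨krel β α, krel_equiv β α⟩

lemma ksetoid_rel {β α : Setoid (Fin n)} {x y : Fin n} :
    ksetoid β α x y ↔ krel β α x y := Iff.rfl

lemma ksetoid_le (β α : Setoid (Fin n)) : ksetoid β α ≤ β := by intro x y h; exact h.1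

lemma ksetoid_mono {β β' : Setoid (Fin n)} (α : Setoid (Fin n)) (h : β ≤ β') :
    ksetoid β α ≤ ksetoid β' α := by
  intro x y hxy; exact ⟨h hxy.1, hxy.2.1, hxy.2.2⟩

lemma krel_of_lt {β α : Setoid (Fin n)} {x y : Fin n} (hxy : x < y) (h1 : β x y)
    (h2 : ¬ sep α x y) : krel β α x y :=
  ⟨h1, fun _ => h2, fun h => absurd (lt_of_lt_of_le hxy h) (lt_irrefl x)⟩

lemma nc_straddle {β : Setoid (Fin n)} (hβ : IsNoncrossing β) {x a y c : Fin n}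
    (h1 : x ≤ a) (h2 : a < y) (h3 : y ≤ c) (hxy : β x y) (hac : β a c) : β a y := by
  rcases eq_or_lt_of_le h1 with rfl | h1
  · exact hxy
  · rcases eq_or_lt_of_le h3 with rfl | h3
    · exact hac
    · exact β.trans' (β.symm' (hβ x a y c h1 h2 h3 hxy hac)) hxy

lemma nc_straddle2 {β : Setoid (Fin n)} (hβ : IsNoncrossing β) {a x c y : Fin n}
    (h1 : a < x) (h2 : x ≤ c) (h3 : c < y) (hac : β a c) (hxy : β x y) : β a x := by
  rcases eq_or_lt_of_le h2 with rfl | h2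
  · exact hac
  · exact hβ a x c y h1 h2 h3 hac hxy

lemma ksetoid_nc {β α : Setoid (Fin n)} (hβ : IsNoncrossing β) :
    IsNoncrossing (ksetoid β α) := by
  intro a b c d hab hbc hcd hac hbd
  rw [ksetoid_rel] at hac hbd ⊢
  have hβab : β a b := hβ a b c d hab hbc hcd hac.1 hbd.1
  refine krel_of_lt hab hβab ?_
  rintro ⟨u, v, huv, (⟨d1, d2, d3⟩ | ⟨d1, d2, d3⟩)⟩
  · exact (hac.2.1 (le_of_lt (lt_trans hab hbc)))
      ⟨u, v, huv, Or.inl ⟨d1, d2, le_trans d3 (le_of_lt hbc)⟩⟩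
  · rcases le_or_gt v c with h | h
    · exact (hbd.2.1 (le_of_lt (lt_trans hbc hcd)))
        ⟨u, v, huv, Or.inl ⟨d2, d3, le_trans h (le_of_lt hcd)⟩⟩
    · exact (hac.2.1 (le_of_lt (lt_trans hab hbc)))
        ⟨u, v, huv, Or.inr ⟨d1, le_trans d2 (le_of_lt hbc), h⟩⟩

lemma mcf_ksetoid (β α : Setoid (Fin n)) : MCF α (ksetoid β α) := by
  constructor
  · intro a b c d h1 h2 h3 hac hbd
    exact (hbd.2.1 (le_of_lt (lt_of_lt_of_le h2 h3)))
      ⟨a, c, hac, Or.inl ⟨h1, h2, h3⟩⟩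
  · intro a b c d h1 h2 h3 hac hbd
    exact (hac.2.1 (le_of_lt (lt_of_lt_of_le h1 h2)))
      ⟨b, d, hbd, Or.inr ⟨h1, h2, h3⟩⟩

lemma le_ksetoid_of_mcf {β α τ : Setoid (Fin n)} (h : MCF α τ) (hτβ : τ ≤ β) :
    τ ≤ ksetoid β α := by
  have key : ∀ x y : Fin n, x ≤ y → τ x y → ¬ sep α x y := by
    intro x y _ hτ
    rintro ⟨u, v, huv, (⟨d1, d2, d3⟩ | ⟨d1, d2, d3⟩)⟩
    · exact h.1 u x v y d1 d2 d3 huv hτ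
    · exact h.2 x u y v d1 d2 d3 hτ huv
  intro x y hxy
  exact ⟨hτβ hxy, fun h' => key x y h' hxy, fun h' => key y x h' (τ.symm' hxy)⟩

end Krew
namespace Krew
variable {n : ℕ}
lemma kconn {α β : Setoid (Fin n)} (hβ : IsNoncrossing β) (hα' : IsNoncrossing α)
    (hαβ : α ≤ β) (γ : Setoid (Fin n)) (hα : α ≤ γ) (hk : ksetoid β α ≤ γ) : β ≤ γ := by
  classical
  have main : ∀ k : ℕ, ∀ a b : Fin n, a ≤ b → (b : ℕ) - (a : ℕ) ≤ k → β a b → γ a b := by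
    intro k
    induction k with
    | zero =>
      intro a b hab hkb _
      have : a = b := le_antisymm hab (by rw [Fin.le_def]; omega)
      subst this; exact γ.refl' a
    | succ k ih =>
      intro a b hab hkb hβab
      rcases eq_or_lt_of_le hab with rfl | hab
      · exact γ.refl' a
      · set s : Finset (Fin n) :=
          Finset.univ.filter (fun x => a < x ∧ x ≤ b ∧ β a x) with hs
        have hbs : b ∈ s := by simp [hs, hab, hβab]
        have hne : s.Nonempty := ⟨b, hbs⟩
        set c := s.min' hne with hcdef
        have hcs : c ∈ s := s.min'_mem hne
        have hac : a < c := by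
          have := Finset.mem_filter.1 hcs; exact this.2.1
        have hcb : c ≤ b := (Finset.mem_filter.1 hcs).2.2.1
        have hβac : β a c := (Finset.mem_filter.1 hcs).2.2.2
        have hnolt : ∀ x, a < x → x < c → ¬ β a x := by
          intro x h1 h2 hb
          have hxs : x ∈ s := by
            simp only [hs, Finset.mem_filter, Finset.mem_univ, true_and]
            exact ⟨h1, le_trans (le_of_lt h2) hcb, hb⟩
          exact absurd (s.min'_le x hxs) (not_le.2 h2)
        -- main trichotomy: γ a c
        have hgac : γ a c := by
          by_cases h1 : α a c
          · exact hα h1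
          by_cases h2 : ∃ u, u < a ∧ α u c
          · -- case T2
            set t : Finset (Fin n) := Finset.univ.filter (fun u => u < a ∧ α u c) with ht
            have htne : t.Nonempty := by
              obtain ⟨u, hu1, hu2⟩ := h2; exact ⟨u, by simp [ht, hu1, hu2]⟩
            set u := t.max' htne with hudef
            have hus := t.max'_mem htne
            have hua : u < a := (Finset.mem_filter.1 hus).2.1
            have huc : α u c := (Finset.mem_filter.1 hus).2.2
            have umax : ∀ w, w < a → α w c → w ≤ u := by
              intro w hw1 hw2; exact t.le_max' w (by simp [ht, hw1, hw2])
            have hRua : krel β α u a := by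
              refine krel_of_lt hua (β.trans' (hαβ huc) (β.symm' hβac)) ?_
              rintro ⟨x, y, hxy, (⟨d1, d2, d3⟩ | ⟨d1, d2, d3⟩)⟩
              · -- x ≤ u < y ≤ a
                have hyc : α y c := by
                  rcases eq_or_lt_of_le d1 with rfl | d1'
                  · exact α.trans' (α.symm' hxy) huc
                  · have hyltc : y < c := lt_of_le_of_lt d3 hac
                    have hxu : α x u := hα' x u y c d1' d2 hyltc hxy huc
                    exact α.trans' (α.symm' (α.trans' (α.symm' hxu) hxy)) huc
                rcases eq_or_lt_of_le d3 with rfl | d3'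
                · exact h1 hyc
                · exact absurd (umax y d3' hyc) (not_le.2 d2)
              · -- u < x ≤ a < y
                rcases le_or_gt y c with hyc | hyc
                · rcases eq_or_lt_of_le hyc with rfl | hyc'
                  · -- y = c : α x c
                    rcases eq_or_lt_of_le d2 with rfl | d2'
                    · exact h1 hxy
                    · exact absurd (umax x d2' hxy) (not_le.2 d1)
                  · have hβay : β a y :=
                      nc_straddle hβ d2 d3 (le_of_lt hyc') (hαβ hxy) hβac
                    exact hnolt y d3 hyc' hβay
                · -- c < y : crossing u < x < c < y in α
                  have hxc : x < c := lt_of_le_of_lt d2 hac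
                  have hux : α u x := hα' u x c y d1 hxc hyc huc hxy
                  have hxc' : α x c := α.trans' (α.symm' hux) huc
                  rcases eq_or_lt_of_le d2 with rfl | d2'
                  · exact h1 hxc'
                  · exact absurd (umax x d2' hxc') (not_le.2 d1)
            exact γ.trans' (γ.symm' (hk hRua)) (hα huc)
          by_cases h3 : ∃ v, c < v ∧ α c v
          · -- case T3
            set t : Finset (Fin n) := Finset.univ.filter (fun v => α c v) with ht
            have htne : t.Nonempty := ⟨c, by simp [ht, α.refl' c]⟩
            set v := t.max' htne with hvdef
            have hvs := t.max'_mem htne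
            have hcv : α c v := by
              have := Finset.mem_filter.1 hvs; exact this.2
            have vmax : ∀ w, α c w → w ≤ v := by
              intro w hw; exact t.le_max' w (by simp [ht, hw])
            have hvgt : c < v := by
              obtain ⟨w, hw1, hw2⟩ := h3
              exact lt_of_lt_of_le hw1 (vmax w hw2)
            have hRav : krel β α a v := by
              refine krel_of_lt (lt_trans hac hvgt) (β.trans' hβac (hαβ hcv)) ?_
              rintro ⟨x, y, hxy, (⟨d1, d2, d3⟩ | ⟨d1, d2, d3⟩)⟩
              · -- x ≤ a < y ≤ v
                rcases le_or_gt y c with hyc | hyc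
                · rcases eq_or_lt_of_le hyc with rfl | hyc'
                  · rcases eq_or_lt_of_le d1 with rfl | d1'
                    · exact h1 hxy
                    · exact h2 ⟨x, d1', hxy⟩
                  · have hβay : β a y := nc_straddle hβ d1 d2 (le_of_lt hyc') (hαβ hxy) hβac
                    exact hnolt y d2 hyc' hβay
                · rcases eq_or_lt_of_le d3 with rfl | d3'
                  · have hxc : α x c := α.trans' hxy (α.symm' hcv)
                    rcases eq_or_lt_of_le d1 with rfl | d1'
                    · exact h1 hxc
                    · exact h2 ⟨x, d1', hxc⟩
                  · have hxltc : x < c := lt_of_le_of_lt d1 hac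
                    have hxc : α x c := hα' x c y v hxltc hyc d3' hxy hcv
                    rcases eq_or_lt_of_le d1 with rfl | d1'
                    · exact h1 hxc
                    · exact h2 ⟨x, d1', hxc⟩
              · -- a < x ≤ v < y
                rcases le_or_gt x c with hxc | hxc
                · rcases eq_or_lt_of_le hxc with rfl | hxc'
                  · exact absurd (vmax y hxy) (not_le.2 d3)
                  · have hβax : β a x :=
                      nc_straddle2 hβ d1 (le_of_lt hxc') (lt_trans hvgt d3) hβac (hαβ hxy)
                    exact hnolt x d1 hxc' hβax
                · rcases eq_or_lt_of_le d2 with rfl | d2'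
                  · exact absurd (vmax y (α.trans' hcv hxy)) (not_le.2 d3)
                  · have hcx : α c x := hα' c x v y hxc d2' d3 hcv hxy
                    exact absurd (vmax y (α.trans' hcx hxy)) (not_le.2 d3)
            exact γ.trans' (hk hRav) (γ.symm' (hα hcv))
          · -- case T4 : a and c directly k-related
            refine hk (krel_of_lt hac hβac ?_)
            rintro ⟨x, y, hxy, (⟨d1, d2, d3⟩ | ⟨d1, d2, d3⟩)⟩
            · rcases eq_or_lt_of_le d3 with rfl | d3'
              · rcases eq_or_lt_of_le d1 with rfl | d1'
                · exact h1 hxy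
                · exact h2 ⟨x, d1', hxy⟩
              · exact hnolt y d2 d3' (nc_straddle hβ d1 d2 (le_of_lt d3') (hαβ hxy) hβac)
            · rcases eq_or_lt_of_le d2 with rfl | d2'
              · exact h3 ⟨y, d3, hxy⟩
              · exact hnolt x d1 d2' (nc_straddle2 hβ d1 (le_of_lt d2') d3 hβac (hαβ hxy))
        -- recurse on [c, b]
        have hβcb : β c b := β.trans' (β.symm' hβac) hβab
        have hγcb : γ c b := by
          refine ih c b hcb ?_ hβcb
          have h1 : (a : ℕ) < (c : ℕ) := hac
          have h2 : (c : ℕ) ≤ (b : ℕ) := hcb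
          omega
        exact γ.trans' hgac hγcb
  intro x y h
  rcases le_total x y with hxy | hyx
  · exact main ((y : ℕ) - x) x y hxy le_rfl h
  · exact γ.symm' (main ((x : ℕ) - y) y x hyx le_rfl (β.symm' h))

/-! ### chains in the join of two setoids -/

def grel (α τ : Setoid (Fin n)) (x y : Fin n) : Prop := α x y ∨ τ x y

lemma grel_symm {α τ : Setoid (Fin n)} : Symmetric (grel α τ) := by
  rintro x y (h | h)
  · exact Or.inl (α.symm' h)
  · exact Or.inr (τ.symm' h)

abbrev rtg (α τ : Setoid (Fin n)) (x y : Fin n) : Prop :=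
  Relation.ReflTransGen (grel α τ) x y

lemma rtg_symm {α τ : Setoid (Fin n)} {x y : Fin n} (h : rtg α τ x y) : rtg α τ y x :=
  by
    induction h with
    | refl => exact Relation.ReflTransGen.refl
    | tail _ e ih => exact Relation.ReflTransGen.head (grel_symm e) ih

lemma sup_rel_iff {α τ : Setoid (Fin n)} {x y : Fin n} :
    (α ⊔ τ) x y ↔ rtg α τ x y := by
  constructor
  · intro h
    have hS : α ⊔ τ ≤ ⟨rtg α τ, ⟨fun _ => Relation.ReflTransGen.refl,
        fun h => rtg_symm h, fun h1 h2 => h1.trans h2⟩⟩ := by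
      refine sup_le ?_ ?_
      · intro u v huv; exact Relation.ReflTransGen.single (Or.inl huv)
      · intro u v huv; exact Relation.ReflTransGen.single (Or.inr huv)
    exact hS h
  · intro h
    induction h with
    | refl => exact (α ⊔ τ).refl' x
    | tail _ e ih =>
      rcases e with e | e
      · exact (α ⊔ τ).trans' ih ((le_sup_left : α ≤ α ⊔ τ) e)
      · exact (α ⊔ τ).trans' ih ((le_sup_right : τ ≤ α ⊔ τ) e)

/-- discrete IVT along a chain -/
lemma rtg_ivt {α τ : Setoid (Fin n)} {x y : Fin n} (h : rtg α τ x y) :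
    ∀ m : Fin n, x ≤ m → m < y → ∃ p q, grel α τ p q ∧ rtg α τ x p ∧ p ≤ m ∧ m < q := by
  induction h with
  | refl => intro m h1 h2; exact absurd (lt_of_le_of_lt h1 h2) (lt_irrefl x)
  | @tail b c hxb e ih =>
    intro m h1 h2
    rcases le_or_gt b m with hb | hb
    · exact ⟨b, c, e, hxb, hb, h2⟩
    · exact ih m h1 hb

/-- the first edge of a chain leaving the open interval `(u,v)` crosses it. -/
lemma rtg_first_exit {α τ : Setoid (Fin n)} {u v w w' : Fin n} (h : rtg α τ w w')
    (hout : w' < u ∨ v < w') :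
    ∀ _ : u < w, ∀ _ : w < v, ¬ rtg α τ u w → ¬ rtg α τ v w →
      ∃ e f, u < e ∧ e < v ∧ (f < u ∨ v < f) ∧ grel α τ e f ∧ rtg α τ w e := by
  induction h using Relation.ReflTransGen.head_induction_on with
  | refl =>
    intro h1 h2 _ _
    rcases hout with h | h
    · exact absurd (lt_trans h1 h) (lt_irrefl u)
    · exact absurd (lt_trans h h2) (lt_irrefl v)
  | @head z y e hyw ih =>
    intro h1 h2 h3 h4
    rcases lt_or_ge u y with hy1 | hy1
    · rcases lt_or_ge y v with hy2 | hy2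
      · -- y still inside
        have h3' : ¬ rtg α τ u y := fun hc =>
          h3 (hc.tail (grel_symm e))
        have h4' : ¬ rtg α τ v y := fun hc =>
          h4 (hc.tail (grel_symm e))
        obtain ⟨e', f', he1, he2, he3, he4, he5⟩ := ih hy1 hy2 h3' h4'
        exact ⟨e', f', he1, he2, he3, he4, Relation.ReflTransGen.head e he5⟩
      · -- y ≥ v : exit to the right (y = v impossible)
        rcases eq_or_lt_of_le hy2 with rfl | hy2
        · exact absurd (Relation.ReflTransGen.single (grel_symm e)) h4
        · exact ⟨z, y, h1, h2, Or.inr hy2, e, Relation.ReflTransGen.refl⟩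
    · -- y ≤ u : exit to the left (y = u impossible)
      rcases eq_or_lt_of_le hy1 with rfl | hy1
      · exact absurd (Relation.ReflTransGen.single (grel_symm e)) h3
      · exact ⟨z, y, h1, h2, Or.inl hy1, e, Relation.ReflTransGen.refl⟩

lemma rtg_closed {α τ : Setoid (Fin n)} {W : Set (Fin n)}
    (hW : ∀ u v, grel α τ u v → u ∈ W → v ∈ W) {p q : Fin n} (h : rtg α τ p q)
    (hp : p ∈ W) : q ∈ W := by
  induction h with
  | refl => exact hp
  | tail _ e ih => exact hW _ _ e ih

lemma cross_contra {α τ : Setoid (Fin n)} (hα : IsNoncrossing α) (hτ : IsNoncrossing τ)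
    (hm : MCF α τ) {x1 x2 y1 y2 : Fin n} (h1 : x1 < x2) (h2 : x2 < y1) (h3 : y1 < y2)
    (e1 : grel α τ x1 y1) (e2 : grel α τ x2 y2) : rtg α τ x1 x2 := by
  rcases e1 with e1 | e1 <;> rcases e2 with e2 | e2
  · exact Relation.ReflTransGen.single (Or.inl (hα x1 x2 y1 y2 h1 h2 h3 e1 e2))
  · exact absurd (hm.1 x1 x2 y1 y2 (le_of_lt h1) h2 (le_of_lt h3) e1 e2) (fun h => h)
  · exact absurd (hm.2 x1 x2 y1 y2 h1 (le_of_lt h2) h3 e1 e2) (fun h => h)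
  · exact Relation.ReflTransGen.single (Or.inr (hτ x1 x2 y1 y2 h1 h2 h3 e1 e2))

/-- the join of a mixed-crossing-free pair of noncrossing partitions is noncrossing. -/
lemma sup_nc {α τ : Setoid (Fin n)} (hα : IsNoncrossing α) (hτ : IsNoncrossing τ)
    (hm : MCF α τ) : IsNoncrossing (α ⊔ τ) := by
  intro a b c d hab hbc hcd hac hbd
  replace hac := sup_rel_iff.mp hac
  replace hbd := sup_rel_iff.mp hbd
  refine sup_rel_iff.mpr ?_
  by_contra hnab
  -- an edge of comp b straddling c
  obtain ⟨p, q, hepq, hbp, hpc, hcq⟩ := rtg_ivt hbd c (le_of_lt hbc) hcd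
  have hpc : p < c := by
    rcases eq_or_lt_of_le hpc with rfl | h
    · exact absurd (hac.trans (rtg_symm hbp)) hnab
    · exact h
  have hbq : rtg α τ b q := hbp.tail hepq
  have hnpc : ¬ rtg α τ p c := fun hc => hnab (hac.trans (rtg_symm (hbp.trans hc)))
  have hnqc : ¬ rtg α τ q c := fun hc => hnab (hac.trans (rtg_symm (hbq.trans hc)))
  have haout : (a < p ∨ q < a) ∨ (p < a ∧ a < q) := by
    rcases lt_trichotomy a p with h | rfl | h
    · exact Or.inl (Or.inl h)
    · exact absurd (rtg_symm hbp) hnab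
    · rcases lt_trichotomy a q with h' | rfl | h'
      · exact Or.inr ⟨h, h'⟩
      · exact absurd (rtg_symm hbq) hnab
      · exact Or.inl (Or.inr h')
  rcases haout with hout | ⟨hpa, haq⟩
  · -- a outside [p,q] : first exit of comp a from (p,q) at c
    obtain ⟨e, f, k1, k2, k3, k4, k5⟩ :=
      rtg_first_exit (rtg_symm hac) hout hpc hcq hnpc hnqc
    have hae : rtg α τ a e := hac.trans k5
    rcases k3 with k3 | k3
    · have : rtg α τ f p := cross_contra hα hτ hm k3 k1 k2 (grel_symm k4) hepq
      exact hnab ((hae.tail k4).trans (this.trans (rtg_symm hbp)))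
    · have : rtg α τ p e := cross_contra hα hτ hm k1 k2 k3 hepq k4
      exact hnab (hae.trans (rtg_symm (hbp.trans this)))
  · -- a strictly inside (p,q)
    obtain ⟨u, v, heuv, hau, hub, hbv⟩ := rtg_ivt hac b (le_of_lt hab) hbc
    have hub : u < b := by
      rcases eq_or_lt_of_le hub with rfl | h
      · exact absurd hau hnab
      · exact h
    have hav : rtg α τ a v := hau.tail heuv
    have hnub : ¬ rtg α τ u b := fun hc => hnab (hau.trans hc)
    have hnvb : ¬ rtg α τ v b := fun hc => hnab (hav.trans hc)
    have hnpu : p ≠ u := fun hc => hnab (hau.trans (rtg_symm (hc ▸ hbp)))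
    have hnpv : p ≠ v := fun hc => hnab (hav.trans (rtg_symm (hc ▸ hbp)))
    have hnqu : q ≠ u := fun hc => hnab (hau.trans (rtg_symm (hc ▸ hbq)))
    have hnqv : q ≠ v := fun hc => hnab (hav.trans (rtg_symm (hc ▸ hbq)))
    have finish1 : ∀ w' : Fin n, rtg α τ b w' → (w' < u ∨ v < w') → False := by
      intro w' hbw hout
      obtain ⟨e, f, k1, k2, k3, k4, k5⟩ := rtg_first_exit hbw hout hub hbv hnub hnvb
      rcases k3 with k3 | k3
      · have hfu : rtg α τ f u := cross_contra hα hτ hm k3 k1 k2 (grel_symm k4) heuv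
        exact hnub (rtg_symm ((k5.tail k4).trans hfu))
      · have hue : rtg α τ u e := cross_contra hα hτ hm k1 k2 k3 heuv k4
        exact hnub (hue.trans (rtg_symm k5))
    by_cases h5 : p < u ∨ v < p
    · exact finish1 p hbp h5
    by_cases h6 : q < u ∨ v < q
    · exact finish1 q hbq h6
    · -- p, q strictly inside (u, v)
      push_neg at h5 h6
      have hup : u < p := lt_of_le_of_ne h5.1 (Ne.symm hnpu)
      have hcu : rtg α τ c u := (rtg_symm hac).trans hau
      obtain ⟨e, f, k1, k2, k3, k4, k5⟩ :=
        rtg_first_exit hcu (Or.inl hup) hpc hcq hnpc hnqc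
      rcases k3 with k3 | k3
      · have hfp : rtg α τ f p := cross_contra hα hτ hm k3 k1 k2 (grel_symm k4) hepq
        exact hnpc (rtg_symm ((k5.tail k4).trans hfp))
      · have hpe : rtg α τ p e := cross_contra hα hτ hm k1 k2 k3 hepq k4
        exact hnpc (hpe.trans (rtg_symm k5))


/-! ### counting blocks via block minima -/

open Classical in
noncomputable def nmin (π : Setoid (Fin n)) : Finset (Fin n) :=
  Finset.univ.filter (fun a => ∀ b, b < a → ¬ π b a)

lemma mem_nmin {π : Setoid (Fin n)} {a : Fin n} :
    a ∈ nmin π ↔ ∀ b, b < a → ¬ π b a := by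
  simp [nmin]

lemma nmin_bot : nmin (⊥ : Setoid (Fin n)) = Finset.univ := by
  ext a
  simp only [mem_nmin, Finset.mem_univ, iff_true]
  intro b hb hrel
  have : b = a := by
    rw [show ((⊥ : Setoid (Fin n)) : Fin n → Fin n → Prop) = (· = ·) from Setoid.bot_def] at hrel
    exact hrel
  exact absurd (this ▸ hb) (lt_irrefl a)

lemma nmin_antitone {π π' : Setoid (Fin n)} (h : π ≤ π') : nmin π' ⊆ nmin π := by
  intro a ha
  rw [mem_nmin] at ha ⊢
  exact fun b hb hrel => ha b hb (h hrel)

open Classical in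
noncomputable def mblk (π : Setoid (Fin n)) (x : Fin n) : Fin n :=
  (Finset.univ.filter (fun y => π y x)).min' ⟨x, by simp [π.refl' x]⟩

lemma mblk_rel (π : Setoid (Fin n)) (x : Fin n) : π (mblk π x) x := by
  classical
  have := Finset.min'_mem (Finset.univ.filter (fun y => π y x)) ⟨x, by simp [π.refl' x]⟩
  simpa [mblk] using (Finset.mem_filter.1 this).2

lemma mblk_le {π : Setoid (Fin n)} {x y : Fin n} (h : π y x) : mblk π x ≤ y := by
  classical
  exact Finset.min'_le _ y (by simp [h])

lemma mblk_mem_nmin (π : Setoid (Fin n)) (x : Fin n) : mblk π x ∈ nmin π := by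
  rw [mem_nmin]
  intro b hb hrel
  exact absurd (mblk_le (π.trans' hrel (mblk_rel π x))) (not_le.2 hb)

lemma nmin_unique {π : Setoid (Fin n)} {x y : Fin n} (hx : x ∈ nmin π) (hy : y ∈ nmin π)
    (h : π x y) : x = y := by
  rcases lt_trichotomy x y with hlt | heq | hlt
  · exact absurd h ((mem_nmin.1 hy) x hlt)
  · exact heq
  · exact absurd (π.symm' h) ((mem_nmin.1 hx) y hlt)

lemma setoid_eq_of_le_of_card {π π' : Setoid (Fin n)} (h : π ≤ π')
    (hc : (nmin π).card ≤ (nmin π').card) : π = π' := by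
  have hsub : nmin π' ⊆ nmin π := nmin_antitone h
  have heq : nmin π' = nmin π := Finset.eq_of_subset_of_card_le hsub hc
  refine le_antisymm h ?_
  intro a b hab
  have h1 : π (mblk π a) a := mblk_rel π a
  have h2 : π (mblk π b) b := mblk_rel π b
  have hm1 : mblk π a ∈ nmin π' := heq ▸ mblk_mem_nmin π a
  have hm2 : mblk π b ∈ nmin π' := heq ▸ mblk_mem_nmin π b
  have hrel : π' (mblk π a) (mblk π b) :=
    π'.trans' (h h1) (π'.trans' hab (π'.symm' (h h2)))
  have := nmin_unique hm1 hm2 hrel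
  exact π.trans' (π.symm' h1) (this ▸ h2)


/-! ### joining with a single pair -/

def pairS (p q : Fin n) : Setoid (Fin n) where
  r x y := x = y ∨ (x = p ∧ y = q) ∨ (x = q ∧ y = p)
  iseqv := by
    constructor
    · intro x; exact Or.inl rfl
    · rintro x y (rfl | ⟨rfl, rfl⟩ | ⟨rfl, rfl⟩)
      · exact Or.inl rfl
      · exact Or.inr (Or.inr ⟨rfl, rfl⟩)
      · exact Or.inr (Or.inl ⟨rfl, rfl⟩)
    · rintro x y z (rfl | ⟨rfl, rfl⟩ | ⟨rfl, rfl⟩) h'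
      · exact h'
      · rcases h' with rfl | ⟨h1, rfl⟩ | ⟨_, rfl⟩
        · exact Or.inr (Or.inl ⟨rfl, rfl⟩)
        · exact Or.inl h1.symm
        · exact Or.inl rfl
      · rcases h' with rfl | ⟨_, rfl⟩ | ⟨h1, rfl⟩
        · exact Or.inr (Or.inr ⟨rfl, rfl⟩)
        · exact Or.inl rfl
        · exact Or.inl h1.symm

/-- explicit description of the join with a single pair. -/
def supPairRel (s : Setoid (Fin n)) (p q : Fin n) (x y : Fin n) : Prop :=
  s x y ∨ (s x p ∧ s q y) ∨ (s x q ∧ s p y)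

lemma supPair_equiv (s : Setoid (Fin n)) (p q : Fin n) : Equivalence (supPairRel s p q) := by
  constructor
  · intro x; exact Or.inl (s.refl' x)
  · rintro x y (h | ⟨h1, h2⟩ | ⟨h1, h2⟩)
    · exact Or.inl (s.symm' h)
    · exact Or.inr (Or.inr ⟨s.symm' h2, s.symm' h1⟩)
    · exact Or.inr (Or.inl ⟨s.symm' h2, s.symm' h1⟩)
  · rintro x y z (h | ⟨h1, h2⟩ | ⟨h1, h2⟩) (h' | ⟨h1', h2'⟩ | ⟨h1', h2'⟩)
    · exact Or.inl (s.trans' h h')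
    · exact Or.inr (Or.inl ⟨s.trans' h h1', h2'⟩)
    · exact Or.inr (Or.inr ⟨s.trans' h h1', h2'⟩)
    · exact Or.inr (Or.inl ⟨h1, s.trans' h2 h'⟩)
    · exact Or.inl (s.trans' h1 (s.trans' (s.symm' (s.trans' h2 h1')) h2'))
    · exact Or.inl (s.trans' h1 h2')
    · exact Or.inr (Or.inr ⟨h1, s.trans' h2 h'⟩)
    · exact Or.inl (s.trans' h1 h2')
    · exact Or.inl (s.trans' h1 (s.trans' (s.symm' (s.trans' h2 h1')) h2'))

def supPairS (s : Setoid (Fin n)) (p q : Fin n) : Setoid (Fin n) :=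
  ⟨supPairRel s p q, supPair_equiv s p q⟩

lemma sup_pairS_eq (s : Setoid (Fin n)) (p q : Fin n) : s ⊔ pairS p q = supPairS s p q := by
  refine le_antisymm ?_ ?_
  · refine sup_le ?_ ?_
    · intro x y h; exact Or.inl h
    · rintro x y (rfl | ⟨hx, hy⟩ | ⟨hx, hy⟩)
      · exact Or.inl (s.refl' x)
      · exact Or.inr (Or.inl ⟨by rw [hx], by rw [hy]⟩)
      · exact Or.inr (Or.inr ⟨by rw [hx], by rw [hy]⟩)
  · rintro x y (h | ⟨h1, h2⟩ | ⟨h1, h2⟩)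
    · exact (le_sup_left : s ≤ s ⊔ pairS p q) h
    · refine (s ⊔ pairS p q).trans' ((le_sup_left : s ≤ _) h1) ?_
      refine (s ⊔ pairS p q).trans' ((le_sup_right : pairS p q ≤ _)
        (Or.inr (Or.inl ⟨rfl, rfl⟩))) ((le_sup_left : s ≤ _) h2)
    · refine (s ⊔ pairS p q).trans' ((le_sup_left : s ≤ _) h1) ?_
      refine (s ⊔ pairS p q).trans' ((le_sup_right : pairS p q ≤ _)
        (Or.inr (Or.inr ⟨rfl, rfl⟩))) ((le_sup_left : s ≤ _) h2)

/-- merging two distinct blocks removes exactly one block minimum. -/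
lemma nmin_supPair {s : Setoid (Fin n)} {p q : Fin n} (hpq : ¬ s p q) :
    nmin (supPairS s p q) = (nmin s).erase (max (mblk s p) (mblk s q)) := by
  set m1 := mblk s p with hm1
  set m2 := mblk s q with hm2
  have hne : m1 ≠ m2 := by
    intro hc
    have h2 : s m2 q := mblk_rel s q
    rw [← hc] at h2
    exact hpq (s.trans' (s.symm' (mblk_rel s p)) h2)
  have hrelmM : supPairS s p q (min m1 m2) (max m1 m2) := by
    rcases le_total m1 m2 with h | h
    · rw [min_eq_left h, max_eq_right h]
      exact Or.inr (Or.inl ⟨mblk_rel s p, s.symm' (mblk_rel s q)⟩)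
    · rw [min_eq_right h, max_eq_left h]
      exact Or.inr (Or.inr ⟨mblk_rel s q, s.symm' (mblk_rel s p)⟩)
  have hmM : min m1 m2 < max m1 m2 := by
    rcases lt_or_gt_of_ne hne with h | h
    · rw [min_eq_left (le_of_lt h), max_eq_right (le_of_lt h)]; exact h
    · rw [min_eq_right (le_of_lt h), max_eq_left (le_of_lt h)]; exact h
  ext x
  simp only [Finset.mem_erase]
  constructor
  · intro hx
    have hx' : x ∈ nmin s := by
      rw [mem_nmin] at hx ⊢
      exact fun b hb hrel => hx b hb (Or.inl hrel)
    refine ⟨?_, hx'⟩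
    intro hc
    exact (mem_nmin.1 hx) (min m1 m2) (hc ▸ hmM) (hc ▸ hrelmM)
  · rintro ⟨hxM, hx⟩
    rw [mem_nmin]
    rintro b hb (h | ⟨h1, h2⟩ | ⟨h1, h2⟩)
    · exact (mem_nmin.1 hx) b hb h
    · -- b ~ p, q ~ x : x is the minimum of q's block
      have hxm2 : x = m2 := by
        refine nmin_unique hx (mblk_mem_nmin s q) (s.trans' (s.symm' h2) (s.symm' (mblk_rel s q)))
      have hm2M : m2 ≠ max m1 m2 := fun hc => hxM (hxm2.trans hc)
      have hm2lt : m2 < m1 := by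
        rcases le_total m1 m2 with h' | h'
        · exact absurd (max_eq_right h').symm hm2M
        · exact lt_of_le_of_ne h' (fun hc => hne hc.symm)
      exact absurd (mblk_le h1) (not_le.2 (lt_trans hb (hxm2 ▸ hm2lt)))
    · have hxm1 : x = m1 := by
        refine nmin_unique hx (mblk_mem_nmin s p) (s.trans' (s.symm' h2) (s.symm' (mblk_rel s p)))
      have hm1M : m1 ≠ max m1 m2 := fun hc => hxM (hxm1.trans hc)
      have hm1lt : m1 < m2 := by
        rcases le_total m2 m1 with h' | h'
        · exact absurd (max_eq_left h').symm hm1M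
        · exact lt_of_le_of_ne h' hne
      exact absurd (mblk_le h1) (not_le.2 (lt_trans hb (hxm1 ▸ hm1lt)))

lemma card_nmin_supPair {s : Setoid (Fin n)} {p q : Fin n} (hpq : ¬ s p q) :
    (nmin (supPairS s p q)).card + 1 = (nmin s).card := by
  rw [nmin_supPair hpq]
  have hM : max (mblk s p) (mblk s q) ∈ nmin s := by
    rcases le_total (mblk s p) (mblk s q) with h | h
    · rw [max_eq_right h]; exact mblk_mem_nmin s q
    · rw [max_eq_left h]; exact mblk_mem_nmin s p
  rw [Finset.card_erase_of_mem hM]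
  have : 1 ≤ (nmin s).card := Finset.card_pos.2 ⟨_, hM⟩
  omega

/-! ### generic reachability helpers -/

lemma reach_exit {r : Fin n → Fin n → Prop} {S : Set (Fin n)} {x y : Fin n}
    (h : Relation.ReflTransGen r x y) (hy : y ∈ S) :
    ∀ _ : x ∉ S, ∃ p q, r p q ∧ p ∉ S ∧ q ∈ S ∧
      Relation.ReflTransGen (fun u v => r u v ∧ u ∉ S ∧ v ∉ S) x p := by
  induction h using Relation.ReflTransGen.head_induction_on with
  | refl => intro hx; exact absurd hy hx
  | @head z c e hcy ih =>
    intro hz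
    by_cases hc : c ∈ S
    · exact ⟨z, c, e, hz, hc, Relation.ReflTransGen.refl⟩
    · obtain ⟨p, q, h1, h2, h3, h4⟩ := ih hc
      exact ⟨p, q, h1, h2, h3, Relation.ReflTransGen.head ⟨e, hz, hc⟩ h4⟩

/-! ### splitting an innermost arc -/

def splitRel (τ : Setoid (Fin n)) (a : Fin n) (x y : Fin n) : Prop :=
  τ x y ∧ (τ a x → (x ≤ a ↔ y ≤ a))

lemma split_equiv (τ : Setoid (Fin n)) (a : Fin n) : Equivalence (splitRel τ a) := by
  constructor
  · intro x; exact ⟨τ.refl' x, fun _ => Iff.rfl⟩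
  · rintro x y ⟨h1, h2⟩
    refine ⟨τ.symm' h1, fun hay => ?_⟩
    exact (h2 (τ.trans' hay (τ.symm' h1))).symm
  · rintro x y z ⟨h1, h2⟩ ⟨h3, h4⟩
    refine ⟨τ.trans' h1 h3, fun hax => ?_⟩
    exact (h2 hax).trans (h4 (τ.trans' hax h1))

def splitS (τ : Setoid (Fin n)) (a : Fin n) : Setoid (Fin n) :=
  ⟨splitRel τ a, split_equiv τ a⟩

lemma splitS_le (τ : Setoid (Fin n)) (a : Fin n) : splitS τ a ≤ τ := by
  intro x y h; exact h.1

lemma splitS_nc {τ : Setoid (Fin n)} (hτ : IsNoncrossing τ) (a : Fin n) :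
    IsNoncrossing (splitS τ a) := by
  intro w x y z h1 h2 h3 hwy hxz
  refine ⟨hτ w x y z h1 h2 h3 hwy.1 hxz.1, fun haw => ?_⟩
  have hiff := hwy.2 haw
  constructor
  · intro hwa
    exact le_of_lt (lt_of_lt_of_le h2 (hiff.1 hwa))
  · intro hxa
    exact le_of_lt (lt_of_lt_of_le h1 hxa)

lemma split_sup_pair {τ : Setoid (Fin n)} {a b : Fin n} (hab : a < b) (hτab : τ a b) :
    τ = supPairS (splitS τ a) a b := by
  have hle : ∀ x y, τ x y → supPairRel (splitS τ a) a b x y := by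
    intro x y hxy
    by_cases hax : τ a x
    · by_cases hiff : (x ≤ a ↔ y ≤ a)
      · exact Or.inl ⟨hxy, fun _ => hiff⟩
      · rcases le_or_gt x a with hx | hx
        · have hy : ¬ y ≤ a := fun hy => hiff ⟨fun _ => hy, fun _ => hx⟩
          refine Or.inr (Or.inl ⟨⟨τ.symm' hax, fun _ => iff_of_true hx le_rfl⟩, ?_⟩)
          refine ⟨τ.trans' (τ.symm' hτab) (τ.trans' hax hxy), fun _ => ?_⟩
          exact iff_of_false (not_le.2 hab) hy
        · have hy : y ≤ a := by
            by_contra hy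
            exact hiff ⟨fun h => absurd h (not_le.2 hx), fun h => absurd h hy⟩
          refine Or.inr (Or.inr ⟨⟨τ.trans' hxy (τ.trans' (τ.symm'
            (τ.trans' hax hxy)) hτab), fun _ => iff_of_false (not_le.2 hx) (not_le.2 hab)⟩, ?_⟩)
          exact ⟨τ.trans' hax hxy, fun _ => iff_of_true le_rfl hy⟩
    · exact Or.inl ⟨hxy, fun h => absurd h hax⟩
  apply le_antisymm
  · intro x y h; exact hle x y h
  · rintro x y (h | ⟨h1, h2⟩ | ⟨h1, h2⟩)
    · exact h.1
    · exact τ.trans' h1.1 (τ.trans' hτab h2.1)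
    · exact τ.trans' h1.1 (τ.trans' (τ.symm' hτab) h2.1)

lemma nmin_split {τ : Setoid (Fin n)} (hτ : IsNoncrossing τ) {a b : Fin n} (hab : a < b)
    (hτab : τ a b)
    (hmin : ∀ x y, τ x y → x < y → (b : ℕ) - (a : ℕ) ≤ (y : ℕ) - (x : ℕ)) :
    nmin (splitS τ a) = insert b (nmin τ) := by
  ext y
  simp only [Finset.mem_insert, mem_nmin]
  constructor
  · intro hy
    by_cases hyb : y = b
    · exact Or.inl hyb
    right
    intro z hz hτzy
    by_cases hay : τ a y
    · rcases le_or_gt y a with hya | hya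
      · exact hy z hz ⟨hτzy, fun _ => iff_of_true (le_of_lt (lt_of_lt_of_le hz hya)) hya⟩
      · -- y in the block of a, y > a, y ≠ b ⇒ y > b
        have hyb' : b < y := by
          rcases lt_trichotomy y b with h | h | h
          · exact absurd (hmin a y hay hya) (by omega)
          · exact absurd h hyb
          · exact h
        exact hy b hyb' ⟨τ.trans' (τ.symm' hτab) hay,
          fun _ => iff_of_false (not_le.2 hab) (not_le.2 (lt_trans hab hyb'))⟩
    · exact hy z hz ⟨hτzy, fun h => absurd (τ.trans' h hτzy) hay⟩
  · rintro (h | hy)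
    · subst h
      intro z hz hzy
      have hτzb : τ z y := hzy.1
      have haz : τ a z := τ.trans' hτab (τ.symm' hτzb)
      have hza : ¬ z ≤ a := by
        intro hza
        exact (not_le.2 hab) ((hzy.2 haz).1 hza)
      have haz' : (a : ℕ) < (z : ℕ) := by
        rcases lt_or_ge a z with h' | h'
        · exact h'
        · exact absurd h' hza
      have hzb : (z : ℕ) < (y : ℕ) := hz
      exact absurd (hmin z y hτzb hz) (by omega)
    · intro z hz hzy
      exact hy z hz hzy.1

lemma exists_innermost {τ : Setoid (Fin n)} (h : ∃ x y, τ x y ∧ x ≠ y) :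
    ∃ a b, τ a b ∧ a < b ∧
      (∀ x y, τ x y → x < y → (b : ℕ) - (a : ℕ) ≤ (y : ℕ) - (x : ℕ)) := by
  classical
  set s : Finset (Fin n × Fin n) :=
    (Finset.univ ×ˢ Finset.univ).filter (fun p => τ p.1 p.2 ∧ p.1 < p.2) with hs
  have hne : s.Nonempty := by
    obtain ⟨x, y, hxy, hxyne⟩ := h
    rcases lt_or_gt_of_ne hxyne with h' | h'
    · exact ⟨(x, y), by simp [hs, hxy, h']⟩
    · exact ⟨(y, x), by simp [hs, τ.symm' hxy, h']⟩
  obtain ⟨p, hp, hpmin⟩ := s.exists_min_image (fun p => (p.2 : ℕ) - (p.1 : ℕ)) hne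
  simp only [hs, Finset.mem_filter] at hp
  refine ⟨p.1, p.2, hp.2.1, hp.2.2, fun x y hxy hlt => ?_⟩
  exact hpmin (x, y) (by simp [hs, hxy, hlt])

/-- Splitting an innermost arc disconnects its endpoints: key counting lemma. -/
lemma split_disconnected {α τ : Setoid (Fin n)} (hα : IsNoncrossing α)
    (hτ : IsNoncrossing τ) (hm : MCF α τ) {a b : Fin n} (hab : a < b) (hτab : τ a b)
    (hmin : ∀ x y, τ x y → x < y → (b : ℕ) - (a : ℕ) ≤ (y : ℕ) - (x : ℕ)) :
    ¬ rtg α (splitS τ a) a b := by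
  intro hreach
  have F1 : ∀ z w, a < z → z < b → τ z w → z = w := by
    intro z w hz1 hz2 hzw
    by_contra hne
    rcases lt_or_gt_of_ne hne with hlt | hgt
    · rcases le_or_gt w b with hwb | hwb
      · have h1 : (a : ℕ) < z := hz1
        have h2 : (w : ℕ) ≤ b := hwb
        exact absurd (hmin z w hzw hlt) (by omega)
      · have hτaz : τ a z := hτ a z b w hz1 hz2 hwb hτab hzw
        have h1 : (z : ℕ) < b := hz2
        exact absurd (hmin a z hτaz hz1) (by omega)
    · have hzw' : τ w z := τ.symm' hzw
      rcases lt_trichotomy w a with hwa | hwa | hwa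
      · have hτwa : τ w a := hτ w a z b hwa hz1 hz2 hzw' hτab
        have hτaz : τ a z := τ.trans' (τ.symm' hτwa) hzw'
        have h1 : (z : ℕ) < b := hz2
        exact absurd (hmin a z hτaz hz1) (by omega)
      · have hτaz : τ a z := hwa ▸ hzw'
        have h1 : (z : ℕ) < b := hz2
        exact absurd (hmin a z hτaz hz1) (by omega)
      · have h1 : (a : ℕ) < w := hwa
        have h2 : (z : ℕ) < b := hz2
        exact absurd (hmin w z hzw' hgt) (by omega)
  have F2 : ∀ z y, α z y → a < y → y ≤ b → (z ≤ a ∨ b < z) → False := by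
    intro z y hzy hy1 hy2 hz
    rcases hz with hz | hz
    · exact hm.1 z a y b hz hy1 hy2 hzy hτab
    · exact hm.2 a y b z hy1 hy2 hz hτab (α.symm' hzy)
  have hbS1 : b ∈ {z : Fin n | a < z ∧ z ≤ b} := ⟨hab, le_rfl⟩
  have haS1 : a ∉ {z : Fin n | a < z ∧ z ≤ b} := fun hc => lt_irrefl a hc.1
  obtain ⟨x₁, y₁, e₁, hx₁, hy₁, hpath₁⟩ := reach_exit hreach hbS1 haS1
  have hx₁side : x₁ ≤ a ∨ b < x₁ := by
    by_contra hc
    push_neg at hc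
    exact hx₁ ⟨hc.1, hc.2⟩
  have hx₁b : b < x₁ ∧ τ x₁ b := by
    rcases e₁ with e | e
    · exact (F2 x₁ y₁ e hy₁.1 hy₁.2 hx₁side).elim
    · by_cases hyb : y₁ = b
      · have hτx₁b : τ x₁ b := hyb ▸ e.1
        rcases hx₁side with hs | hs
        · have hax₁ : τ a x₁ := τ.trans' hτab (τ.symm' hτx₁b)
          have := (e.2 hax₁).1 hs
          rw [hyb] at this
          exact absurd this (not_le.2 hab)
        · exact ⟨hs, hτx₁b⟩
      · have : y₁ = x₁ := F1 y₁ x₁ hy₁.1 (lt_of_le_of_ne hy₁.2 hyb) (τ.symm' e.1)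
        exact absurd (this ▸ hy₁) hx₁
  obtain ⟨hbx₁, hτx₁b⟩ := hx₁b
  have hx₁U : x₁ ∈ {z : Fin n | τ a z ∧ b ≤ z} := ⟨τ.trans' hτab (τ.symm' hτx₁b), le_of_lt hbx₁⟩
  have haU : a ∉ {z : Fin n | τ a z ∧ b ≤ z} := fun hc => absurd hc.2 (not_le.2 hab)
  obtain ⟨x₂, z₀, e₂, hx₂U, hz₀U, hpath₂⟩ := reach_exit hpath₁ hx₁U haU
  have hz₀S1 : z₀ ∉ {z : Fin n | a < z ∧ z ≤ b} := e₂.2.2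
  have hτaz₀ : τ a z₀ := hz₀U.1
  have hbz₀ : b < z₀ := by
    rcases eq_or_lt_of_le hz₀U.2 with hc | hc
    · exact absurd ⟨hab.trans_le hc.le, hc ▸ le_rfl⟩ hz₀S1
    · exact hc
  have haz₀ : a < z₀ := lt_trans hab hbz₀
  by_cases hx₂M : x₂ ∈ {z : Fin n | a < z ∧ z ≤ z₀}
  · -- the path enters (a, z₀] through an impossible edge
    have haM : a ∉ {z : Fin n | a < z ∧ z ≤ z₀} := fun hc => lt_irrefl a hc.1
    obtain ⟨w, y, e₃, hwM, hyM, _⟩ := reach_exit hpath₂ hx₂M haM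
    have hgrel := e₃.1.1
    have hwS1 : w ∉ {z : Fin n | a < z ∧ z ≤ b} := e₃.1.2.1
    have hyS1 : y ∉ {z : Fin n | a < z ∧ z ≤ b} := e₃.1.2.2
    have hwU : w ∉ {z : Fin n | τ a z ∧ b ≤ z} := e₃.2.1
    have hyU : y ∉ {z : Fin n | τ a z ∧ b ≤ z} := e₃.2.2
    have hay : a < y := hyM.1
    have hyz₀ : y ≤ z₀ := hyM.2
    have hby : b < y := by
      by_contra hc
      exact hyS1 ⟨hay, le_of_not_gt hc⟩
    have hnay : ¬ τ a y := fun hc => hyU ⟨hc, le_of_lt hby⟩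
    have hylt : y < z₀ := lt_of_le_of_ne hyz₀ (fun hc => hnay (hc ▸ hτaz₀))
    have hwside : w ≤ a ∨ z₀ < w := by
      by_contra hc
      push_neg at hc
      exact hwM ⟨hc.1, hc.2⟩
    rcases hgrel with e | e
    · rcases hwside with hs | hs
      · exact hm.1 w a y z₀ hs hay hyz₀ e hτaz₀
      · exact hm.2 a y z₀ w hay hyz₀ hs hτaz₀ (α.symm' e)
    · have hτwy : τ w y := e.1
      rcases hwside with hs | hs
      · by_cases haw : τ a w
        · exact hnay (τ.trans' haw hτwy)
        · have hwa : w < a := lt_of_le_of_ne hs (fun hc => haw (hc ▸ τ.refl' a))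
          exact haw (τ.symm' (hτ w a y z₀ hwa hay hylt hτwy hτaz₀))
      · exact hnay (hτ a y z₀ w hay hylt hs hτaz₀ (τ.symm' hτwy))
  · -- the final edge into z₀ is impossible
    have hx₂side : x₂ ≤ a ∨ z₀ < x₂ := by
      by_contra hc
      push_neg at hc
      exact hx₂M ⟨hc.1, hc.2⟩
    rcases e₂.1 with e | e
    · rcases hx₂side with hs | hs
      · exact hm.1 x₂ a z₀ z₀ hs haz₀ le_rfl e hτaz₀
      · exact hm.2 a z₀ z₀ x₂ haz₀ le_rfl hs hτaz₀ (α.symm' e)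
    · have hτx₂z₀ : τ x₂ z₀ := e.1
      have hax₂ : τ a x₂ := τ.trans' hτaz₀ (τ.symm' hτx₂z₀)
      have hx₂b : ¬ b ≤ x₂ := fun hc => hx₂U ⟨hax₂, hc⟩
      have hx₂a : x₂ ≤ a := by
        rcases e₂.2.1 with _
        by_contra hc
        exact hx₂U ⟨hax₂, by
          by_contra hc2
          exact (e₂.2.1 : x₂ ∉ {z : Fin n | a < z ∧ z ≤ b}) ⟨lt_of_not_ge hc, le_of_not_ge hc2⟩⟩
      exact absurd ((e.2 hax₂).1 hx₂a) (not_le.2 haz₀)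

lemma nmin_card_lt {τ : Setoid (Fin n)} {b : Fin n} (hb : b ∉ nmin τ) :
    (nmin τ).card < n := by
  have h1 : (nmin τ).card ≤ n := by
    have := Finset.card_le_card (Finset.subset_univ (nmin τ))
    rwa [Finset.card_univ, Fintype.card_fin] at this
  rcases lt_or_eq_of_le h1 with h | h
  · exact h
  · have h2 := Finset.eq_univ_of_card (nmin τ) (by rw [h, Fintype.card_fin])
    rw [h2] at hb
    exact absurd (Finset.mem_univ b) hb

lemma setoid_trivial_eq_bot {τ : Setoid (Fin n)} (h : ∀ x y, τ x y → x = y) :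
    τ = ⊥ := by
  refine Setoid.ext fun x y => ?_
  rw [show ((⊥ : Setoid (Fin n)) : Fin n → Fin n → Prop) = (· = ·) from Setoid.bot_def]
  exact ⟨fun hxy => h x y hxy, fun hxy => hxy ▸ τ.refl' x⟩

/-- The block-counting identity for mixed-crossing-free pairs. -/
lemma count_mcf {α : Setoid (Fin n)} (hα : IsNoncrossing α) :
    ∀ k : ℕ, ∀ τ : Setoid (Fin n), n - (nmin τ).card ≤ k → IsNoncrossing τ →
      MCF α τ → (nmin α).card + (nmin τ).card = n + (nmin (α ⊔ τ)).card := by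
  intro k
  induction k with
  | zero =>
    intro τ hk hτ hm
    -- τ must be trivial
    have htriv : ∀ x y : Fin n, τ x y → x = y := by
      by_contra hc
      push_neg at hc
      obtain ⟨a, b, hτab, hab, hmin⟩ := exists_innermost hc
      have hbnot : b ∉ nmin τ := fun h => (mem_nmin.1 h) a hab hτab
      have := nmin_card_lt hbnot
      omega
    have hbot : τ = ⊥ := setoid_trivial_eq_bot htriv
    subst hbot
    rw [nmin_bot, sup_eq_left.2 bot_le, Finset.card_univ, Fintype.card_fin]
    omega
  | succ k ih =>
    intro τ hk hτ hm
    by_cases htriv : ∀ x y : Fin n, τ x y → x = y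
    · have hbot : τ = ⊥ := setoid_trivial_eq_bot htriv
      subst hbot
      rw [nmin_bot, sup_eq_left.2 bot_le, Finset.card_univ, Fintype.card_fin]
      omega
    · push_neg at htriv
      obtain ⟨a, b, hτab, hab, hmin⟩ := exists_innermost htriv
      have hτ'le := splitS_le τ a
      have hτ'nc := splitS_nc hτ a
      have hm' : MCF α (splitS τ a) := hm.mono hτ'le
      have hnm : nmin (splitS τ a) = insert b (nmin τ) := nmin_split hτ hab hτab hmin
      have hbnot : b ∉ nmin τ := fun h => (mem_nmin.1 h) a hab hτab
      have hcard' : (nmin (splitS τ a)).card = (nmin τ).card + 1 := by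
        rw [hnm]; exact Finset.card_insert_of_notMem hbnot
      have hltn : (nmin τ).card < n := nmin_card_lt hbnot
      have IH := ih (splitS τ a) (by omega) hτ'nc hm'
      have hd1 : ¬ (α ⊔ splitS τ a) a b :=
        fun hc => split_disconnected hα hτ hm hab hτab hmin (sup_rel_iff.mp hc)
      have hτeq : τ = supPairS (splitS τ a) a b := split_sup_pair hab hτab
      have hτeq2 : τ = splitS τ a ⊔ pairS a b := by
        rw [sup_pairS_eq]; exact hτeq
      have hsup : α ⊔ τ = supPairS (α ⊔ splitS τ a) a b := by
        rw [← sup_pairS_eq]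
        conv_lhs => rw [hτeq2]
        exact (sup_assoc α (splitS τ a) (pairS a b)).symm
      have hc2 : (nmin (supPairS (α ⊔ splitS τ a) a b)).card + 1 =
          (nmin (α ⊔ splitS τ a)).card := card_nmin_supPair hd1
      rw [hsup]
      omega

lemma sup_ksetoid {α β : Setoid (Fin n)} (hβ : IsNoncrossing β) (hα : IsNoncrossing α)
    (hαβ : α ≤ β) : α ⊔ ksetoid β α = β :=
  le_antisymm (sup_le hαβ (ksetoid_le β α))
    (kconn hβ hα hαβ _ le_sup_left le_sup_right)

/-- Uniqueness: a mixed-crossing-free partner is the Kreweras complement in the join. -/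
lemma mcf_eq_ksetoid {α τ : Setoid (Fin n)} (hα : IsNoncrossing α) (hτ : IsNoncrossing τ)
    (hm : MCF α τ) : τ = ksetoid (α ⊔ τ) α := by
  have hβnc : IsNoncrossing (α ⊔ τ) := sup_nc hα hτ hm
  have h1 : τ ≤ ksetoid (α ⊔ τ) α := le_ksetoid_of_mcf hm le_sup_right
  have hKnc : IsNoncrossing (ksetoid (α ⊔ τ) α) := ksetoid_nc hβnc
  have hjoin : α ⊔ ksetoid (α ⊔ τ) α = α ⊔ τ := sup_ksetoid hβnc hα le_sup_left
  have c1 := count_mcf hα (n - (nmin τ).card) τ le_rfl hτ hm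
  have c2 := count_mcf hα (n - (nmin (ksetoid (α ⊔ τ) α)).card) _ le_rfl hKnc
    (mcf_ksetoid (α ⊔ τ) α)
  rw [hjoin] at c2
  exact setoid_eq_of_le_of_card h1 (by omega)

lemma mcf_sup_right {α σ τ : Setoid (Fin n)} (h1 : MCF α σ) (h2 : MCF α τ) :
    MCF α (σ ⊔ τ) := by
  constructor
  · intro x p y q hxp hpy hyq hαxy hsup
    have hW : ∀ u v, grel σ τ u v → (x ≤ u ∧ u < y) → (x ≤ v ∧ v < y) := by
      rintro u v e ⟨hu1, hu2⟩
      rcases lt_or_ge v x with hv | hv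
      · rcases e with e | e
        · exact (h1.2 v x u y hv hu1 hu2 (σ.symm' e) hαxy).elim
        · exact (h2.2 v x u y hv hu1 hu2 (τ.symm' e) hαxy).elim
      · rcases lt_or_ge v y with hv2 | hv2
        · exact ⟨hv, hv2⟩
        · rcases e with e | e
          · exact (h1.1 x u y v hu1 hu2 hv2 hαxy e).elim
          · exact (h2.1 x u y v hu1 hu2 hv2 hαxy e).elim
    have := rtg_closed hW (sup_rel_iff.mp hsup) ⟨hxp, hpy⟩
    exact absurd this.2 (not_lt.2 hyq)
  · intro p x q y hpx hxq hqy hτ' hαxy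
    have hW : ∀ u v, grel σ τ u v → (x ≤ u ∧ u < y) → (x ≤ v ∧ v < y) := by
      rintro u v e ⟨hu1, hu2⟩
      rcases lt_or_ge v x with hv | hv
      · rcases e with e | e
        · exact (h1.2 v x u y hv hu1 hu2 (σ.symm' e) hαxy).elim
        · exact (h2.2 v x u y hv hu1 hu2 (τ.symm' e) hαxy).elim
      · rcases lt_or_ge v y with hv2 | hv2
        · exact ⟨hv, hv2⟩
        · rcases e with e | e
          · exact (h1.1 x u y v hu1 hu2 hv2 hαxy e).elim
          · exact (h2.1 x u y v hu1 hu2 hv2 hαxy e).elim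
    have := rtg_closed hW (rtg_symm (sup_rel_iff.mp hτ')) ⟨hxq, hqy⟩
    exact absurd this.1 (not_le.2 hpx)

lemma mcf_sup_left {α σ τ : Setoid (Fin n)} (h1 : MCF α τ) (h2 : MCF σ τ) :
    MCF (α ⊔ σ) τ := by
  have hW : ∀ b d : Fin n, τ b d →
      ∀ u v, grel α σ u v → (b < u ∧ u ≤ d) → (b < v ∧ v ≤ d) := by
    intro b d hτbd u v e ⟨hu1, hu2⟩
    rcases le_or_gt v b with hv | hv
    · rcases e with e | e
      · exact (h1.1 v b u d hv hu1 hu2 (α.symm' e) hτbd).elim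
      · exact (h2.1 v b u d hv hu1 hu2 (σ.symm' e) hτbd).elim
    · rcases le_or_gt v d with hv2 | hv2
      · exact ⟨hv, hv2⟩
      · rcases e with e | e
        · exact (h1.2 b u d v hu1 hu2 hv2 hτbd e).elim
        · exact (h2.2 b u d v hu1 hu2 hv2 hτbd e).elim
  constructor
  · intro a b c d hab hbc hcd hsup hτbd
    have := rtg_closed (hW b d hτbd) (rtg_symm (sup_rel_iff.mp hsup)) ⟨hbc, hcd⟩
    exact absurd this.1 (not_lt.2 hab)
  · intro a b c d hab hbc hcd hτac hsup
    have := rtg_closed (hW a c hτac) (sup_rel_iff.mp hsup) ⟨hab, hbc⟩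
    exact absurd this.2 (not_le.2 hcd)

/-! ### bridge to the shuffle picture -/

def dblE (a : Fin n) : Fin (2*n) := ⟨2*(a:ℕ), by have := a.isLt; omega⟩
def dblO (a : Fin n) : Fin (2*n) := ⟨2*(a:ℕ)+1, by have := a.isLt; omega⟩

lemma decode_dblE (a : Fin n) : decode2 n (dblE a) = Sum.inl a := by
  have h1 : ((dblE a : Fin (2*n)) : ℕ) = 2*(a:ℕ) := rfl
  unfold decode2
  rw [if_pos (by rw [h1]; omega)]
  congr 1
  apply Fin.ext
  show ((dblE a : Fin (2*n)) : ℕ)/2 = (a:ℕ)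
  rw [h1]; omega

lemma decode_dblO (a : Fin n) : decode2 n (dblO a) = Sum.inr a := by
  have h1 : ((dblO a : Fin (2*n)) : ℕ) = 2*(a:ℕ)+1 := rfl
  unfold decode2
  rw [if_neg (by rw [h1]; omega)]
  congr 1
  apply Fin.ext
  show ((dblO a : Fin (2*n)) : ℕ)/2 = (a:ℕ)
  rw [h1]; omega

lemma shuffle_EE {α τ : Setoid (Fin n)} {a b : Fin n} :
    shuffle2 α τ (dblE a) (dblE b) ↔ α a b := by
  show (sumSetoid α τ) (decode2 n (dblE a)) (decode2 n (dblE b)) ↔ α a b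
  rw [decode_dblE, decode_dblE]
  exact Iff.rfl

lemma shuffle_OO {α τ : Setoid (Fin n)} {a b : Fin n} :
    shuffle2 α τ (dblO a) (dblO b) ↔ τ a b := by
  show (sumSetoid α τ) (decode2 n (dblO a)) (decode2 n (dblO b)) ↔ τ a b
  rw [decode_dblO, decode_dblO]
  exact Iff.rfl

lemma shuffle_EO {α τ : Setoid (Fin n)} {a b : Fin n} :
    shuffle2 α τ (dblE a) (dblO b) ↔ False := by
  show (sumSetoid α τ) (decode2 n (dblE a)) (decode2 n (dblO b)) ↔ False
  rw [decode_dblE, decode_dblO]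
  exact Iff.rfl

lemma shuffle_OE {α τ : Setoid (Fin n)} {a b : Fin n} :
    shuffle2 α τ (dblO a) (dblE b) ↔ False := by
  show (sumSetoid α τ) (decode2 n (dblO a)) (decode2 n (dblE b)) ↔ False
  rw [decode_dblO, decode_dblE]
  exact Iff.rfl

lemma fin2_cases (x : Fin (2*n)) : ∃ a : Fin n, x = dblE a ∨ x = dblO a := by
  have hx := x.isLt
  refine ⟨⟨(x : ℕ)/2, by omega⟩, ?_⟩
  rcases Nat.even_or_odd (x : ℕ) with ⟨m, hm⟩ | ⟨m, hm⟩
  · exact Or.inl (Fin.ext (show (x:ℕ) = 2*((x:ℕ)/2) by omega))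
  · exact Or.inr (Fin.ext (show (x:ℕ) = 2*((x:ℕ)/2)+1 by omega))

lemma lt_EE {a b : Fin n} : dblE a < dblE b ↔ a < b := by
  rw [Fin.lt_def, Fin.lt_def]
  show 2*(a:ℕ) < 2*(b:ℕ) ↔ (a:ℕ) < (b:ℕ)
  omega
lemma lt_OO {a b : Fin n} : dblO a < dblO b ↔ a < b := by
  rw [Fin.lt_def, Fin.lt_def]
  show 2*(a:ℕ)+1 < 2*(b:ℕ)+1 ↔ (a:ℕ) < (b:ℕ)
  omega
lemma lt_EO {a b : Fin n} : dblE a < dblO b ↔ a ≤ b := by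
  rw [Fin.lt_def, Fin.le_def]
  show 2*(a:ℕ) < 2*(b:ℕ)+1 ↔ (a:ℕ) ≤ (b:ℕ)
  omega
lemma lt_OE {a b : Fin n} : dblO a < dblE b ↔ a < b := by
  rw [Fin.lt_def, Fin.lt_def]
  show 2*(a:ℕ)+1 < 2*(b:ℕ) ↔ (a:ℕ) < (b:ℕ)
  omega

lemma adm_iff_mcf {α τ : NCP n} : Admissible2 α τ ↔ MCF α.1 τ.1 := by
  constructor
  · intro h
    constructor
    · intro a b c d h1 h2 h3 hac hbd
      exact shuffle_EO.mp (h (dblE a) (dblO b) (dblE c) (dblO d)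
        (lt_EO.mpr h1) (lt_OE.mpr h2) (lt_EO.mpr h3)
        (shuffle_EE.mpr hac) (shuffle_OO.mpr hbd))
    · intro a b c d h1 h2 h3 hac hbd
      exact shuffle_OE.mp (h (dblO a) (dblE b) (dblO c) (dblE d)
        (lt_OE.mpr h1) (lt_EO.mpr h2) (lt_OE.mpr h3)
        (shuffle_OO.mpr hac) (shuffle_EE.mpr hbd))
  · intro hm x y z w h1 h2 h3 hxz hyw
    obtain ⟨a, ha⟩ := fin2_cases x
    obtain ⟨b, hb⟩ := fin2_cases y
    obtain ⟨c, hc⟩ := fin2_cases z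
    obtain ⟨d, hd⟩ := fin2_cases w
    rcases ha with rfl | rfl <;> rcases hb with rfl | rfl <;>
      rcases hc with rfl | rfl <;> rcases hd with rfl | rfl <;>
      simp only [shuffle_EE, shuffle_OO, shuffle_EO, shuffle_OE,
        lt_EE, lt_OO, lt_EO, lt_OE] at hxz hyw h1 h2 h3 ⊢
    · exact α.2 a b c d h1 h2 h3 hxz hyw
    · exact hm.1 a b c d h1 h2 h3 hxz hyw
    · exact hm.2 a b c d h1 h2 h3 hxz hyw
    · exact τ.2 a b c d h1 h2 h3 hxz hyw

/-! ### the composition product is the noncrossing join -/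

def halfF (x : Fin (2*n)) : Fin n := ⟨(x:ℕ)/2, by have := x.isLt; omega⟩

lemma pow2_rel {σ : Setoid (Fin n)} {x y : Fin (2*n)} :
    powSetoid 2 σ x y ↔ σ (halfF x) (halfF y) := Iff.rfl

lemma halfF_E (a : Fin n) : halfF (dblE a) = a :=
  Fin.ext (show (2*(a:ℕ))/2 = (a:ℕ) by omega)

lemma halfF_O (a : Fin n) : halfF (dblO a) = a :=
  Fin.ext (show (2*(a:ℕ)+1)/2 = (a:ℕ) by omega)

lemma interval_rel {x y : Fin (2*n)} :
    intervalSetoid 2 n x y ↔ (x:ℕ)/2 = (y:ℕ)/2 := Iff.rfl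

lemma le_ncSup_left (α τ : Setoid (Fin n)) : α ≤ ncSup α τ :=
  le_sInf fun _ hγ => hγ.2.1

lemma le_ncSup_right (α τ : Setoid (Fin n)) : τ ≤ ncSup α τ :=
  le_sInf fun _ hγ => hγ.2.2

lemma ncSup_shuffle_eq (α τ : NCP n) :
    ncSup (shuffle2 α.1 τ.1) (intervalSetoid 2 n) = powSetoid 2 (ncSup α.1 τ.1) := by
  apply le_antisymm
  · apply sInf_le
    refine ⟨powSetoid_isNoncrossing 2 ⟨ncSup α.1 τ.1, ncSup_isNoncrossing _ _⟩, ?_, ?_⟩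
    · intro x y hxy
      obtain ⟨a, ha⟩ := fin2_cases x
      obtain ⟨b, hb⟩ := fin2_cases y
      rcases ha with rfl | rfl <;> rcases hb with rfl | rfl
      · refine pow2_rel.mpr ?_
        rw [halfF_E, halfF_E]
        exact le_ncSup_left α.1 τ.1 (shuffle_EE.mp hxy)
      · exact (shuffle_EO.mp hxy).elim
      · exact (shuffle_OE.mp hxy).elim
      · refine pow2_rel.mpr ?_
        rw [halfF_O, halfF_O]
        exact le_ncSup_right α.1 τ.1 (shuffle_OO.mp hxy)
    · intro x y hxy
      refine pow2_rel.mpr ?_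
      rw [show halfF x = halfF y from Fin.ext (interval_rel.mp hxy)]
  · apply le_sInf
    rintro γ ⟨hγnc, hγsh, hγint⟩
    have hmono : Monotone (dblE : Fin n → Fin (2*n)) := by
      intro a b hab
      rw [Fin.le_def] at hab ⊢
      show 2*(a:ℕ) ≤ 2*(b:ℕ)
      omega
    have hσnc : IsNoncrossing (Setoid.comap dblE γ) :=
      isNoncrossing_comap_of_monotone _ hmono hγnc
    have hEO : ∀ a : Fin n, γ (dblE a) (dblO a) := fun a =>
      hγint (show intervalSetoid 2 n (dblE a) (dblO a) from
        interval_rel.mpr (show (2*(a:ℕ))/2 = (2*(a:ℕ)+1)/2 by omega))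
    have hσα : α.1 ≤ Setoid.comap dblE γ := by
      intro a b hab
      exact hγsh (shuffle_EE.mpr hab)
    have hστ : τ.1 ≤ Setoid.comap dblE γ := by
      intro a b hab
      have h1 : γ (dblO a) (dblO b) := hγsh (shuffle_OO.mpr hab)
      exact γ.trans' (hEO a) (γ.trans' h1 (γ.symm' (hEO b)))
    have hle : ncSup α.1 τ.1 ≤ Setoid.comap dblE γ := sInf_le ⟨hσnc, hσα, hστ⟩
    intro x y hxy
    have h1 : (ncSup α.1 τ.1) (halfF x) (halfF y) := pow2_rel.mp hxy
    have h2 : γ (dblE (halfF x)) (dblE (halfF y)) := hle h1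
    have h3 : γ (dblE (halfF x)) x :=
      hγint (show intervalSetoid 2 n (dblE (halfF x)) x from
        interval_rel.mpr (show (2*((x:ℕ)/2))/2 = (x:ℕ)/2 by omega))
    have h4 : γ (dblE (halfF y)) y :=
      hγint (show intervalSetoid 2 n (dblE (halfF y)) y from
        interval_rel.mpr (show (2*((y:ℕ)/2))/2 = (y:ℕ)/2 by omega))
    exact γ.trans' (γ.symm' h3) (γ.trans' h2 h4)

lemma npow2_EE {σ : NCP n} {a b : Fin n} :
    (npow 2 σ).1 (dblE a) (dblE b) ↔ σ.1 a b := by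
  show powSetoid 2 σ.1 (dblE a) (dblE b) ↔ σ.1 a b
  rw [pow2_rel, halfF_E, halfF_E]

lemma npow2_inj {σ σ' : NCP n} (h : (npow 2 σ).1 = (npow 2 σ').1) : σ = σ' := by
  apply Subtype.ext
  apply Setoid.ext
  intro a b
  have h2 : (npow 2 σ).1 (dblE a) (dblE b) ↔ (npow 2 σ').1 (dblE a) (dblE b) := by rw [h]
  rwa [npow2_EE, npow2_EE] at h2

lemma nroot_npow (σ : NCP n) : nroot 2 n (npow 2 σ).1 = σ := by
  unfold nroot
  rw [dif_pos ⟨σ, rfl⟩]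
  exact npow2_inj (⟨σ, rfl⟩ : ∃ σ' : NCP n, (npow 2 σ').1 = (npow 2 σ).1).choose_spec

lemma comp_eq_sup (α τ : NCP n) : comp α τ = α ⊔ τ := by
  unfold comp
  rw [ncSup_shuffle_eq]
  exact nroot_npow (α ⊔ τ)

/-! ### the Kreweras complement as an NCP, and the universal property of `comp` -/

lemma ncSup_eq_sup {π μ : Setoid (Fin n)} (h : IsNoncrossing (π ⊔ μ)) :
    ncSup π μ = π ⊔ μ :=
  le_antisymm (sInf_le ⟨h, le_sup_left, le_sup_right⟩)
    (le_sInf fun _ hδ => sup_le hδ.2.1 hδ.2.2)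

noncomputable def kNCP (β α : NCP n) : NCP n := ⟨ksetoid β.1 α.1, ksetoid_nc β.2⟩

lemma sup_kNCP {α β : NCP n} (h : α ≤ β) : α ⊔ kNCP β α = β := by
  apply Subtype.ext
  show ncSup α.1 (ksetoid β.1 α.1) = β.1
  have hsup : α.1 ⊔ ksetoid β.1 α.1 = β.1 := sup_ksetoid β.2 α.2 h
  rw [ncSup_eq_sup (by rw [hsup]; exact β.2), hsup]

lemma adm_kNCP (α β : NCP n) : Admissible2 α (kNCP β α) :=
  adm_iff_mcf.mpr (mcf_ksetoid β.1 α.1)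

lemma comp_kNCP {α β : NCP n} (h : α ≤ β) : comp α (kNCP β α) = β := by
  rw [comp_eq_sup]; exact sup_kNCP h

lemma comp_unique {α γ β : NCP n} (hadm : Admissible2 α γ) (hcomp : comp α γ = β) :
    γ = kNCP β α := by
  have hm : MCF α.1 γ.1 := adm_iff_mcf.mp hadm
  have h1 : IsNoncrossing (α.1 ⊔ γ.1) := sup_nc α.2 γ.2 hm
  have hsup : α.1 ⊔ γ.1 = β.1 := by
    have h3 : (comp α γ).1 = ncSup α.1 γ.1 := by rw [comp_eq_sup]; rfl
    rw [← ncSup_eq_sup h1, ← h3, hcomp]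
  have h4 := mcf_eq_ksetoid α.2 γ.2 hm
  rw [hsup] at h4
  exact Subtype.ext h4

lemma relK_eq {α β : NCP n} (h : α ≤ β) : relKreweras β α = kNCP β α := by
  unfold relKreweras
  have hex : ∃ γ : NCP n, Admissible2 α γ ∧ comp α γ = β :=
    ⟨kNCP β α, adm_kNCP α β, comp_kNCP h⟩
  rw [dif_pos hex]
  exact comp_unique hex.choose_spec.1 hex.choose_spec.2

lemma relK_of_comp {α σ γ : NCP n} (hadm : Admissible2 α σ) (hcomp : comp α σ = γ) :
    relKreweras γ α = σ := by
  have hαγ : α ≤ γ := by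
    rw [← hcomp, comp_eq_sup]
    exact le_sup_left
  rw [relK_eq hαγ]
  exact (comp_unique hadm hcomp).symm

lemma mcf_k_pair {α γ β : NCP n} :
    MCF (ksetoid γ.1 α.1) (ksetoid β.1 γ.1) := by
  constructor
  · intro a b c d h1 h2 h3 hac hbd
    exact (hbd.2.1 (le_of_lt (lt_of_lt_of_le h2 h3)))
      ⟨a, c, hac.1, Or.inl ⟨h1, h2, h3⟩⟩
  · intro a b c d h1 h2 h3 hac hbd
    exact (hac.2.1 (le_of_lt (lt_of_lt_of_le h1 h2)))
      ⟨b, d, hbd.1, Or.inr ⟨h1, h2, h3⟩⟩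

/-- The key fusion identity on the second Kreweras factor. -/
lemma ksetoid_fusion {α γ β : NCP n} (hαγ : α ≤ γ) (hγβ : γ ≤ β) :
    ksetoid γ.1 α.1 ⊔ ksetoid β.1 γ.1 = ksetoid β.1 α.1 := by
  have hm : MCF (ksetoid γ.1 α.1) (ksetoid β.1 γ.1) := mcf_k_pair
  have hδnc : IsNoncrossing (ksetoid γ.1 α.1 ⊔ ksetoid β.1 γ.1) :=
    sup_nc (ksetoid_nc γ.2) (ksetoid_nc β.2) hm
  have hsup1 : α.1 ⊔ ksetoid γ.1 α.1 = γ.1 := sup_ksetoid γ.2 α.2 hαγ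
  have hsup2 : γ.1 ⊔ ksetoid β.1 γ.1 = β.1 := sup_ksetoid β.2 γ.2 hγβ
  have hαδ : α.1 ⊔ (ksetoid γ.1 α.1 ⊔ ksetoid β.1 γ.1) = β.1 := by
    rw [← sup_assoc, hsup1, hsup2]
  have hMCFαδ : MCF α.1 (ksetoid γ.1 α.1 ⊔ ksetoid β.1 γ.1) :=
    mcf_sup_right (mcf_ksetoid γ.1 α.1) ((mcf_ksetoid β.1 γ.1).mono_left hαγ)
  have h4 := mcf_eq_ksetoid α.2 hδnc hMCFαδ
  rw [hαδ] at h4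
  exact h4

/-- The coproduct bijection. -/
lemma kre_bijOn {α β : NCP n} (hαβ : α ≤ β) :
    Set.BijOn (fun γ => (relKreweras γ α, relKreweras β γ))
      {γ : NCP n | α ≤ γ ∧ γ ≤ β}
      {p : NCP n × NCP n | Admissible2 p.1 p.2 ∧ comp p.1 p.2 = relKreweras β α} := by
  rw [relK_eq hαβ]
  refine ⟨?_, ?_, ?_⟩
  · -- maps to
    rintro γ ⟨h1, h2⟩
    have e1 : relKreweras γ α = kNCP γ α := relK_eq h1
    have e2 : relKreweras β γ = kNCP β γ := relK_eq h2
    simp only [Set.mem_setOf_eq, e1, e2]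
    refine ⟨adm_iff_mcf.mpr mcf_k_pair, ?_⟩
    rw [comp_eq_sup]
    apply Subtype.ext
    show ncSup (ksetoid γ.1 α.1) (ksetoid β.1 γ.1) = ksetoid β.1 α.1
    rw [ncSup_eq_sup (sup_nc (ksetoid_nc γ.2) (ksetoid_nc β.2) mcf_k_pair)]
    exact ksetoid_fusion h1 h2
  · -- injective
    intro γ1 h1 γ2 h2 heq
    have f1 := congrArg Prod.fst heq
    simp only at f1
    rw [relK_eq h1.1, relK_eq h2.1] at f1
    calc γ1 = α ⊔ kNCP γ1 α := (sup_kNCP h1.1).symm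
    _ = α ⊔ kNCP γ2 α := by rw [f1]
    _ = γ2 := sup_kNCP h2.1
  · -- surjective
    rintro ⟨σ, τ⟩ ⟨hadm, hcomp⟩
    have hmστ : MCF σ.1 τ.1 := adm_iff_mcf.mp hadm
    have hρ1 : (comp σ τ).1 = σ.1 ⊔ τ.1 := by
      rw [comp_eq_sup]
      exact ncSup_eq_sup (sup_nc σ.2 τ.2 hmστ)
    have hστk : σ.1 ⊔ τ.1 = ksetoid β.1 α.1 := by
      rw [← hρ1, hcomp]; rfl
    have hσρ : σ.1 ≤ ksetoid β.1 α.1 := by rw [← hστk]; exact le_sup_left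
    have hτρ : τ.1 ≤ ksetoid β.1 α.1 := by rw [← hστk]; exact le_sup_right
    have hmασ : MCF α.1 σ.1 := (mcf_ksetoid β.1 α.1).mono hσρ
    have hmατ : MCF α.1 τ.1 := (mcf_ksetoid β.1 α.1).mono hτρ
    have hγ1 : (α ⊔ σ).1 = α.1 ⊔ σ.1 := by
      show ncSup α.1 σ.1 = _
      exact ncSup_eq_sup (sup_nc α.2 σ.2 hmασ)
    refine ⟨α ⊔ σ, ⟨le_sup_left, ?_⟩, ?_⟩
    · refine sup_le hαβ ?_
      exact (le_trans hσρ (ksetoid_le β.1 α.1) : σ.1 ≤ β.1)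
    · have hfst : relKreweras (α ⊔ σ) α = σ :=
        relK_of_comp (adm_iff_mcf.mpr hmασ) (by rw [comp_eq_sup])
      have hmγτ : MCF (α ⊔ σ).1 τ.1 := by
        rw [hγ1]
        exact mcf_sup_left hmατ hmστ
      have hsnd : relKreweras β (α ⊔ σ) = τ := by
        apply relK_of_comp (adm_iff_mcf.mpr hmγτ)
        rw [comp_eq_sup]
        apply Subtype.ext
        show ncSup (α ⊔ σ).1 τ.1 = β.1
        rw [ncSup_eq_sup (sup_nc (α ⊔ σ).2 τ.2 hmγτ), hγ1, sup_assoc, hστk]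
        exact sup_ksetoid β.2 α.2 hαβ
      show (relKreweras (α ⊔ σ) α, relKreweras β (α ⊔ σ)) = (σ, τ)
      rw [hfst, hsnd]

/-- Part 2: the counit condition. -/
lemma relK_eq_bot_iff {α β : NCP n} (hαβ : α ≤ β) :
    relKreweras β α = ⊥ ↔ α = β := by
  rw [relK_eq hαβ]
  constructor
  · intro hbot
    have h1 : α ⊔ kNCP β α = β := sup_kNCP hαβ
    rw [hbot] at h1
    rw [← h1, sup_bot_eq]
  · intro heq
    subst heq
    apply Subtype.ext
    show ksetoid α.1 α.1 = (⊥ : NCP n).1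
    have hb : (⊥ : NCP n).1 = (⊥ : Setoid (Fin n)) := rfl
    rw [hb]
    apply setoid_trivial_eq_bot
    intro x y hxy
    by_contra hne
    rcases lt_or_gt_of_ne hne with h | h
    · exact (hxy.2.1 (le_of_lt h)) ⟨x, y, hxy.1, Or.inl ⟨le_rfl, h, le_rfl⟩⟩
    · exact (hxy.2.2 (le_of_lt h)) ⟨y, x, (α.1).symm' hxy.1, Or.inl ⟨le_rfl, h, le_rfl⟩⟩

end Krew

/-- **Statement 19.** The map `Ψ` from the incidence coalgebra of the poset
`(NCP(n), |)` (spanned by the intervals `[α, β]`, `α | β`) to the incidence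
coalgebra of the partial monoid `(NCP(n), ∘)` (spanned by `NCP(n)`), sending
the basis element `[α, β]` to the basis element `K_β(α)`, is a morphism of
coalgebras: identifying basis elements with the corresponding `Finsupp`
generators, `(Ψ ⊗ Ψ)(Δ([α,β])) = Δ_∘(K_β(α))`, and `Ψ` respects the counits
(`K_β(α) = 0_n` iff `α = β`). -/
theorem kreweras_coalgebra_morphism (n : ℕ) :
    (∀ α β : NCP n, α ≤ β →
      (∑ᶠ γ ∈ {γ : NCP n | α ≤ γ ∧ γ ≤ β},
          (Finsupp.single (relKreweras γ α) (1 : ℚ)) ⊗ₜ[ℚ]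
            (Finsupp.single (relKreweras β γ) (1 : ℚ))
        : (NCP n →₀ ℚ) ⊗[ℚ] (NCP n →₀ ℚ)) =
      ∑ᶠ p ∈ {p : NCP n × NCP n | Admissible2 p.1 p.2 ∧ comp p.1 p.2 = relKreweras β α},
          (Finsupp.single p.1 (1 : ℚ)) ⊗ₜ[ℚ] (Finsupp.single p.2 (1 : ℚ))) ∧
    (∀ α β : NCP n, α ≤ β → (relKreweras β α = ⊥ ↔ α = β)) := by
  constructor
  · intro α β hαβ
    exact finsum_mem_eq_of_bijOn _ (Krew.kre_bijOn hαβ) (fun γ _ => rfl)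
  · intro α β hαβ
    exact Krew.relK_eq_bot_iff hαβ
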